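/- arXiv:math/0008073 — 4 statements merged into one kernel-verified Lean document; each statement's English description precedes it below -/
import Mathlib

section
/- For every positive integer k and every k-bounded partition λ, the k-conjugation operation is an involution: (λ^{ω_k})^{ω_k} = λ. -/
/-- A partition: a weakly decreasing list of positive integers
(parts listed from largest to smallest). -/
def IsPartitionList (l : List ℕ) : Prop :=
  l.Pairwise (· ≥ ·) ∧ ∀ x ∈ l, 0 < x

/-- A `k`-bounded partition: a partition all of whose parts are at most `k`. -/
def IsKBoundedPartition (k : ℕ) (l : List ℕ) : Prop :=
  IsPartitionList l ∧ ∀ x ∈ l, x ≤ k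

/-- Row `i` of a diagram whose rows (listed bottom-to-top) are encoded as
(start column, length) pairs. -/
def rowOf (D : List (ℕ × ℕ)) (i : ℕ) : ℕ × ℕ := D.getD i (0, 0)

/-- `D` encodes a skew diagram (a difference of Young diagrams, rows listed from
bottom to top): all rows are nonempty and, going up, both the left ends and the
right ends of the rows move weakly to the left. -/
def IsSkewRows (D : List (ℕ × ℕ)) : Prop :=
  (∀ r ∈ D, 0 < r.2) ∧
  D.Chain' fun r r' => r'.1 ≤ r.1 ∧ r'.1 + r'.2 ≤ r.1 + r.2

/-- Cell in row `i` (from the bottom), column `j`, belongs to the diagram `D`. -/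
def InDiag (D : List (ℕ × ℕ)) (i j : ℕ) : Prop :=
  i < D.length ∧ (rowOf D i).1 ≤ j ∧ j < (rowOf D i).1 + (rowOf D i).2

/-- The arm of a cell: the number of cells of `D` strictly to its east. -/
def armLen (D : List (ℕ × ℕ)) (i j : ℕ) : ℕ :=
  (rowOf D i).1 + (rowOf D i).2 - 1 - j

/-- The leg of a cell: the number of cells of `D` strictly to its north. -/
def legLen (D : List (ℕ × ℕ)) (i j : ℕ) : ℕ :=
  ((Finset.range D.length).filter fun i' =>
    i < i' ∧ (rowOf D i').1 ≤ j ∧ j < (rowOf D i').1 + (rowOf D i').2).card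

/-- The hook-length of a cell of `D`. -/
def hookLen (D : List (ℕ × ℕ)) (i j : ℕ) : ℕ := armLen D i j + legLen D i j + 1

/-- All hook-lengths of `D` are at most `k`. -/
def HookBounded (k : ℕ) (D : List (ℕ × ℕ)) : Prop :=
  ∀ i j, InDiag D i j → hookLen D i j ≤ k

/-- Shift `D` one column to the right and adjoin a new column of `m` cells in
column `0`, occupying the `m` consecutive rows `h, …, h + m - 1`. -/
def addCol (m h : ℕ) (D : List (ℕ × ℕ)) : List (ℕ × ℕ) :=
  (List.range (max D.length (h + m))).map fun i =>
    if h ≤ i ∧ i < h + m then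
      if i < D.length then (0, (rowOf D i).1 + (rowOf D i).2 + 1) else (0, 1)
    else ((rowOf D i).1 + 1, (rowOf D i).2)

/-- The placement of the new column at height `h` yields a genuine skew diagram
(rows stay contiguous) whose hook-lengths are bounded by `k`. -/
def ColValid (k m h : ℕ) (D : List (ℕ × ℕ)) : Prop :=
  (∀ i, h ≤ i → i < h + m → i < D.length → (rowOf D i).1 = 0) ∧
  IsSkewRows (addCol m h D) ∧ HookBounded k (addCol m h D)

/-- `k`-multiplication `m ×^{(k)} D`: adjoin a first column of length `m` to `D`
so that the result is a skew diagram with hook-lengths bounded by `k`, having as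
few rows as possible (the valid placement heights `h` all satisfy
`h + m ≥ number of rows`, so the lowest valid placement has fewest rows). -/
noncomputable def kMul (k m : ℕ) (D : List (ℕ × ℕ)) : List (ℕ × ℕ) :=
  addCol m (sInf {h | ColValid k m h D}) D

/-- `D(λ)`: the skew diagram obtained by `k`-multiplying the parts of `λ` from
right to left, the innermost part giving a single column. -/
noncomputable def kSkewDiagram (k : ℕ) : List ℕ → List (ℕ × ℕ)
  | [] => []
  | m :: rest => kMul k m (kSkewDiagram k rest)

/-- The `k`-conjugate `λ^{ω_k}`: the row lengths of `D(λ)`, read from the bottom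
row to the top row. -/
noncomputable def kConjugate (k : ℕ) (l : List ℕ) : List ℕ :=
  (kSkewDiagram k l).map Prod.snd

/-!
Write `D(λ) = λ/μ`. The proof characterises `D(λ)` by properties that are symmetric under
transposition (`IsKSkewDiagramOf`): it is a skew diagram with hook lengths at most `k` whose
column lengths are the parts of `λ`, whose row lengths decrease, whose top row starts in the
first column, and every cell of `μ` has hook length at least `k + 2` in `λ`. The last property
is what the minimality of the height in `k`-multiplication propagates. Conversely, removing the
first column of such a diagram leaves one for the remaining parts, and the removed column sits
exactly at the lowest valid height, so these properties determine `D(λ)`. The transpose of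
`D(λ)` has them for the partition `λ^{ω_k}` of its row lengths, hence equals `D(λ^{ω_k})`; the
row lengths of this transpose are the column lengths of `D(λ)`, that is, `λ`.
-/

section Rows

variable {D : List (ℕ × ℕ)} {i i' j : ℕ}

def rowStart (D : List (ℕ × ℕ)) (i : ℕ) : ℕ := (rowOf D i).1

def rowLen (D : List (ℕ × ℕ)) (i : ℕ) : ℕ := (rowOf D i).2

def rowEnd (D : List (ℕ × ℕ)) (i : ℕ) : ℕ := rowStart D i + rowLen D i

lemma rowOf_eq_getElem (h : i < D.length) : rowOf D i = D[i] :=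
  List.getD_eq_getElem D (0, 0) h

lemma rowOf_eq_zero (h : D.length ≤ i) : rowOf D i = (0, 0) :=
  List.getD_eq_default D (0, 0) h

lemma rowLen_eq_sub : rowLen D i = rowEnd D i - rowStart D i := by
  unfold rowEnd; omega

lemma inDiag_iff : InDiag D i j ↔ i < D.length ∧ rowStart D i ≤ j ∧ j < rowEnd D i :=
  Iff.rfl

lemma armLen_eq : armLen D i j = rowEnd D i - 1 - j := rfl

lemma isSkewRows_iff :
    IsSkewRows D ↔ (∀ i < D.length, 0 < rowLen D i) ∧
      ∀ i, i + 1 < D.length →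
        rowStart D (i + 1) ≤ rowStart D i ∧ rowEnd D (i + 1) ≤ rowEnd D i := by
  change (∀ r ∈ D, 0 < r.2) ∧ List.IsChain _ D ↔ _
  simp only [List.isChain_iff_getElem, List.forall_mem_iff_getElem, rowStart, rowEnd, rowLen]
  refine and_congr (forall₂_congr fun i hi => by rw [rowOf_eq_getElem hi]) ?_
  refine ⟨fun h i hi => ?_, fun h i hi => ?_⟩ <;>
  · have := h i (by omega)
    rwa [rowOf_eq_getElem (by omega : i < D.length), rowOf_eq_getElem (by omega : i + 1 < D.length)]
      at *

lemma IsSkewRows.rowLen_pos (hD : IsSkewRows D) (hi : i < D.length) : 0 < rowLen D i :=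
  (isSkewRows_iff.mp hD).1 i hi

lemma IsSkewRows.rowStart_antitone (hD : IsSkewRows D) (h : i ≤ i') (hi' : i' < D.length) :
    rowStart D i' ≤ rowStart D i := by
  induction i', h using Nat.le_induction with
  | base => rfl
  | succ n _ ih => exact ((isSkewRows_iff.mp hD).2 n hi').1.trans (ih (by omega))

lemma IsSkewRows.rowEnd_antitone (hD : IsSkewRows D) (h : i ≤ i') (hi' : i' < D.length) :
    rowEnd D i' ≤ rowEnd D i := by
  induction i', h using Nat.le_induction with
  | base => rfl
  | succ n _ ih => exact ((isSkewRows_iff.mp hD).2 n hi').2.trans (ih (by omega))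

end Rows

section Columns

variable {D D' : List (ℕ × ℕ)} {i i' i₀ j j' a b : ℕ}

def colSet (D : List (ℕ × ℕ)) (j : ℕ) : Finset ℕ :=
  (Finset.range D.length).filter fun i => rowStart D i ≤ j ∧ j < rowEnd D i

noncomputable def colBase (D : List (ℕ × ℕ)) (j : ℕ) : ℕ := sInf {i | InDiag D i j}

def colTop (D : List (ℕ × ℕ)) (j : ℕ) : ℕ := (colSet D j).sup (· + 1)

def colLen (D : List (ℕ × ℕ)) (j : ℕ) : ℕ := (colSet D j).card

lemma mem_colSet : i ∈ colSet D j ↔ InDiag D i j := by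
  simp [colSet, inDiag_iff]

lemma colBase_le (h : InDiag D i j) : colBase D j ≤ i := Nat.sInf_le h

lemma inDiag_colBase (h : InDiag D i j) : InDiag D (colBase D j) j :=
  Nat.sInf_mem (s := {i | InDiag D i j}) ⟨i, h⟩

lemma lt_colTop (h : InDiag D i j) : i < colTop D j :=
  Finset.le_sup (f := (· + 1)) (mem_colSet.mpr h)

lemma colTop_le_length : colTop D j ≤ D.length :=
  Finset.sup_le fun _ hi => (mem_colSet.mp hi).1

lemma colSet_congr (h : ∀ i, InDiag D' i j' ↔ InDiag D i j) : colSet D' j' = colSet D j := by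
  ext; simp only [mem_colSet, h]

lemma IsSkewRows.inDiag_of_le_of_le (hD : IsSkewRows D) (hi : InDiag D i j) (hi' : InDiag D i' j)
    (h : i ≤ a) (h' : a ≤ i') : InDiag D a j :=
  ⟨by have := hi'.1; omega, (hD.rowStart_antitone h (by have := hi'.1; omega)).trans hi.2.1,
    hi'.2.2.trans_le (hD.rowEnd_antitone h' hi'.1)⟩

lemma IsSkewRows.colSet_eq_Ico (hD : IsSkewRows D) (j : ℕ) :
    colSet D j = Finset.Ico (colBase D j) (colTop D j) := by
  ext i
  rw [mem_colSet, Finset.mem_Ico]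
  refine ⟨fun h => ⟨colBase_le h, lt_colTop h⟩, fun ⟨h₁, h₂⟩ => ?_⟩
  have hne : (colSet D j).Nonempty :=
    Finset.nonempty_iff_ne_empty.mpr fun he => by simp [colTop, he] at h₂
  obtain ⟨t, ht, htop⟩ := Finset.exists_mem_eq_sup _ hne (· + 1)
  rw [mem_colSet] at ht
  exact hD.inDiag_of_le_of_le (inDiag_colBase ht) ht h₁ (by simp only [colTop] at h₂; omega)

lemma IsSkewRows.inDiag_iff_col (hD : IsSkewRows D) :
    InDiag D i j ↔ colBase D j ≤ i ∧ i < colTop D j := by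
  rw [← mem_colSet, hD.colSet_eq_Ico, Finset.mem_Ico]

lemma IsSkewRows.inDiag_colTop_sub_one (hD : IsSkewRows D) (h : InDiag D i j) :
    InDiag D (colTop D j - 1) j := by
  have := colBase_le h
  have := lt_colTop h
  exact hD.inDiag_iff_col.mpr ⟨by omega, by omega⟩

lemma IsSkewRows.colTop_eq (hD : IsSkewRows D) (j : ℕ) :
    colTop D j = colBase D j + colLen D j := by
  rw [colLen, hD.colSet_eq_Ico, Nat.card_Ico]
  by_cases h : ∃ i, InDiag D i j
  · obtain ⟨i, hi⟩ := h
    have := lt_colTop hi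
    have := colBase_le hi
    omega
  · push Not at h
    simp [colBase, h]

lemma inDiag_colBase_of_colLen_pos (h : 0 < colLen D j) :
    InDiag D (colBase D j) j := by
  obtain ⟨i, hi⟩ := Finset.card_pos.mp h
  exact inDiag_colBase (mem_colSet.mp hi)

lemma col_eq_of_colSet_eq_Ico (hab : a < b) (h : colSet D j = Finset.Ico a b) :
    colBase D j = a ∧ colTop D j = b ∧ colLen D j = b - a := by
  have hmem : ∀ i, InDiag D i j ↔ a ≤ i ∧ i < b := fun i => by
    rw [← mem_colSet, h, Finset.mem_Ico]
  have ha : InDiag D a j := (hmem a).mpr ⟨le_rfl, hab⟩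
  refine ⟨le_antisymm (colBase_le ha) ((hmem _).mp (inDiag_colBase ha)).1, ?_, ?_⟩
  · have := lt_colTop ((hmem (b - 1)).mpr (by omega))
    refine le_antisymm (Finset.sup_le fun x hx => ?_) (by omega)
    rw [h, Finset.mem_Ico] at hx
    omega
  · rw [colLen, h, Nat.card_Ico]

lemma colTop_pos_iff : 0 < colTop D j ↔ ∃ i, InDiag D i j := by
  refine ⟨fun h => ?_, fun ⟨i, hi⟩ => (Nat.zero_le i).trans_lt (lt_colTop hi)⟩
  by_contra! hne
  have : colSet D j = ∅ := Finset.eq_empty_of_forall_notMem fun i hi => hne i (mem_colSet.mp hi)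
  simp [colTop, this] at h

lemma IsSkewRows.lt_colTop_iff (hD : IsSkewRows D) (hj : InDiag D i₀ j) (hi : i < D.length) :
    i < colTop D j ↔ j < rowEnd D i := by
  have htop := hD.inDiag_colTop_sub_one hj
  obtain ⟨hb, hbs, -⟩ := inDiag_iff.mp (inDiag_colBase hj)
  constructor
  · intro h
    exact (inDiag_iff.mp htop).2.2.trans_le (hD.rowEnd_antitone (by omega) htop.1)
  · intro h
    by_cases hs : rowStart D i ≤ j
    · exact lt_colTop (inDiag_iff.mpr ⟨hi, hs, h⟩)
    · have : i < colBase D j := by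
        by_contra! hle
        have := hD.rowStart_antitone hle hi
        omega
      have := lt_colTop (inDiag_colBase hj)
      omega

def ColsNonempty (D : List (ℕ × ℕ)) : Prop := ∀ j < rowEnd D 0, ∃ i, InDiag D i j

lemma legLen_eq_card : legLen D i j = ((colSet D j).filter (i < ·)).card := by
  rw [legLen, colSet, Finset.filter_filter]
  exact congrArg _ (Finset.filter_congr fun _ _ => by simp only [rowStart, rowEnd, rowLen]; tauto)

lemma legLen_eq_of_colSet_eq_Ico (h : colSet D j = Finset.Ico a b) (hi : a ≤ i) :
    legLen D i j = b - (i + 1) := by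
  have hfilter : (Finset.Ico a b).filter (i < ·) = Finset.Ico (i + 1) b := by
    ext; simp only [Finset.mem_filter, Finset.mem_Ico]; omega
  rw [legLen_eq_card, h, hfilter, Nat.card_Ico]

lemma IsSkewRows.legLen_eq (hD : IsSkewRows D) (h : InDiag D i j) :
    legLen D i j = colTop D j - (i + 1) :=
  legLen_eq_of_colSet_eq_Ico (hD.colSet_eq_Ico j) (colBase_le h)

lemma IsSkewRows.hookLen_eq (hD : IsSkewRows D) (h : InDiag D i j) :
    hookLen D i j = rowEnd D i - 1 - j + (colTop D j - (i + 1)) + 1 := by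
  rw [hookLen, armLen_eq, hD.legLen_eq h]

end Columns

section AddCol

variable {D : List (ℕ × ℕ)} {m h i j : ℕ}

lemma length_addCol : (addCol m h D).length = max D.length (h + m) := by
  simp [addCol]

lemma rowOf_addCol (hi : i < max D.length (h + m)) :
    rowOf (addCol m h D) i =
      if h ≤ i ∧ i < h + m then
        (if i < D.length then (0, rowEnd D i + 1) else (0, 1))
      else (rowStart D i + 1, rowLen D i) := by
  rw [rowOf, List.getD_eq_getElem _ _ (by rwa [length_addCol])]
  simp [addCol, rowStart, rowEnd, rowLen]

lemma rowStart_addCol (hi : i < h + m) :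
    rowStart (addCol m h D) i = if h ≤ i then 0 else rowStart D i + 1 := by
  rw [rowStart, rowOf_addCol (by omega)]
  by_cases hc : h ≤ i <;> simp only [hc, hi, true_and, false_and, if_true, if_false]
  split_ifs <;> rfl

structure Attachable (m h : ℕ) (D : List (ℕ × ℕ)) : Prop where
  le_length : h ≤ D.length
  length_le : D.length ≤ h + m
  rowStart_eq_zero : ∀ i, h ≤ i → i < D.length → rowStart D i = 0

namespace Attachable

lemma length_addCol (hA : Attachable m h D) : (addCol m h D).length = h + m := by
  rw [_root_.length_addCol]; have := hA.length_le; omega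

lemma rowEnd_addCol (hA : Attachable m h D) (hi : i < h + m) :
    rowEnd (addCol m h D) i = if i < D.length then rowEnd D i + 1 else 1 := by
  have := hA.le_length
  rw [rowEnd, rowStart, rowLen, rowOf_addCol (by omega)]
  by_cases hc : h ≤ i
  · simp only [hc, hi, and_self, if_true]
    split_ifs <;> simp
  · simp only [hc, false_and, if_false, show i < D.length by omega, if_true, rowEnd]
    omega

lemma inDiag_addCol_zero (hA : Attachable m h D) :
    InDiag (addCol m h D) i 0 ↔ h ≤ i ∧ i < h + m := by
  rw [inDiag_iff, hA.length_addCol]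
  by_cases hi : i < h + m
  · rw [rowStart_addCol hi, hA.rowEnd_addCol hi]
    split_ifs <;> omega
  · omega

lemma inDiag_addCol_succ (hA : Attachable m h D) :
    InDiag (addCol m h D) i (j + 1) ↔ InDiag D i j := by
  rw [inDiag_iff, inDiag_iff, hA.length_addCol]
  by_cases hi : i < h + m
  · rw [rowStart_addCol hi, hA.rowEnd_addCol hi]
    have := hA.rowStart_eq_zero i
    have := hA.le_length
    split_ifs <;> omega
  · have := hA.length_le
    omega

lemma col_addCol_zero (hA : Attachable m h D) (hm : 0 < m) :
    colBase (addCol m h D) 0 = h ∧ colTop (addCol m h D) 0 = h + m ∧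
      colLen (addCol m h D) 0 = m := by
  have := col_eq_of_colSet_eq_Ico (a := h) (b := h + m) (by omega)
    (Finset.ext fun i => by rw [mem_colSet, hA.inDiag_addCol_zero, Finset.mem_Ico])
  rwa [Nat.add_sub_cancel_left] at this

lemma colSet_addCol_succ (hA : Attachable m h D) : colSet (addCol m h D) (j + 1) = colSet D j :=
  colSet_congr fun _ => hA.inDiag_addCol_succ

lemma colTop_addCol_succ (hA : Attachable m h D) : colTop (addCol m h D) (j + 1) = colTop D j := by
  rw [colTop, colTop, hA.colSet_addCol_succ]

lemma colLen_addCol_succ (hA : Attachable m h D) : colLen (addCol m h D) (j + 1) = colLen D j := by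
  rw [colLen, colLen, hA.colSet_addCol_succ]

end Attachable

end AddCol

section ColValid

variable {D : List (ℕ × ℕ)} {k m h : ℕ}

lemma Attachable.isSkewRows_addCol (hA : Attachable m h D) (hD : IsSkewRows D) :
    IsSkewRows (addCol m h D) := by
  have hh := hA.le_length
  have hrow := (isSkewRows_iff.mp hD)
  rw [isSkewRows_iff, hA.length_addCol]
  refine ⟨fun i hi => ?_, fun i hi => ?_⟩
  · have hpos := hrow.1 i
    have hE := hA.rowEnd_addCol hi
    unfold rowEnd at hE
    rw [rowStart_addCol hi] at hE
    split_ifs at hE <;> omega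
  · have hpos := hrow.1
    have hadj := hrow.2 i
    rw [rowStart_addCol hi, rowStart_addCol (by omega : i < h + m), hA.rowEnd_addCol hi,
      hA.rowEnd_addCol (by omega : i < h + m)]
    simp only [rowEnd] at hadj ⊢
    have := hpos i
    have := hpos (i + 1)
    split_ifs <;> omega

lemma Attachable.hookBounded_addCol (hA : Attachable m h D) (hD : IsSkewRows D)
    (hk : HookBounded k D) (hm : 0 < m) (hmk : m ≤ k)
    (hh : h < D.length → rowEnd D h + m ≤ k) :
    HookBounded k (addCol m h D) := by
  have hskA := hA.isSkewRows_addCol hD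
  intro i j hin
  cases j with
  | zero =>
    have hi := hA.inDiag_addCol_zero.mp hin
    rw [hskA.hookLen_eq hin, (hA.col_addCol_zero hm).2.1, hA.rowEnd_addCol hi.2]
    split_ifs with hlen
    · have := hD.rowEnd_antitone hi.1 hlen
      have := hh (by omega)
      omega
    · omega
  | succ j =>
    have hinD := hA.inDiag_addCol_succ.mp hin
    have hi : i < h + m := hinD.1.trans_le hA.length_le
    have := hk i j hinD
    rw [hskA.hookLen_eq hin, hD.hookLen_eq hinD, hA.colTop_addCol_succ, hA.rowEnd_addCol hi,
      if_pos hinD.1] at *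
    omega

lemma attachable_of_colValid (hm : 0 < m) (hv : ColValid k m h D) : Attachable m h D := by
  obtain ⟨hstart, hskA, -⟩ := hv
  have hrow := isSkewRows_iff.mp hskA
  have hle : h ≤ D.length := by
    by_contra hc
    have hpos := hrow.1 D.length (by rw [length_addCol]; omega)
    rw [rowLen, rowOf_addCol (by omega), if_neg (by omega), rowLen, rowOf_eq_zero le_rfl] at hpos
    exact hpos.false
  have hlen : D.length ≤ h + m := by
    by_contra hc
    have hadj := (hrow.2 (h + m - 1) (by rw [length_addCol]; omega)).1
    have hnew : rowStart (addCol m h D) (h + m - 1) = 0 := by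
      rw [rowStart_addCol (by omega), if_pos (by omega)]
    have hold : rowStart (addCol m h D) (h + m) = rowStart D (h + m) + 1 := by
      rw [rowStart, rowOf_addCol (by omega), if_neg (by omega)]
    rw [Nat.sub_add_cancel (by omega)] at hadj
    omega
  exact ⟨hle, hlen, fun i hi hi' => hstart i hi (by omega) hi'⟩

lemma colValid_iff (hD : IsSkewRows D) (hk : HookBounded k D) (hm : 0 < m) (hmk : m ≤ k) :
    ColValid k m h D ↔ Attachable m h D ∧ (h < D.length → rowEnd D h + m ≤ k) := by
  refine ⟨fun hv => ⟨attachable_of_colValid hm hv, fun hh => ?_⟩, fun ⟨hA, hh⟩ =>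
    ⟨fun i hi _ hi' => hA.rowStart_eq_zero i hi hi', hA.isSkewRows_addCol hD,
      hA.hookBounded_addCol hD hk hm hmk hh⟩⟩
  have hA := attachable_of_colValid hm hv
  have hin : InDiag (addCol m h D) h 0 := hA.inDiag_addCol_zero.mpr ⟨le_rfl, by omega⟩
  have := hv.2.2 h 0 hin
  rw [hv.2.1.hookLen_eq hin, (hA.col_addCol_zero hm).2.1, hA.rowEnd_addCol (by omega),
    if_pos hh] at this
  omega

end ColValid

lemma IsKBoundedPartition.of_cons {k m : ℕ} {l : List ℕ} (hl : IsKBoundedPartition k (m :: l)) :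
    IsKBoundedPartition k l :=
  ⟨⟨(List.pairwise_cons.mp hl.1.1).2, fun x hx => hl.1.2 x (.tail _ hx)⟩,
    fun x hx => hl.2 x (.tail _ hx)⟩

/-- Every cell `(i, j)` of `μ`, where `D = λ/μ`, has hook length at least `k + 2` in `λ`. -/
def LargeOuterHooks (k : ℕ) (D : List (ℕ × ℕ)) : Prop :=
  ∀ i < D.length, ∀ j < rowStart D i, k + 3 + i + j ≤ rowEnd D i + colTop D j

structure IsKSkewDiagramOf (k : ℕ) (l : List ℕ) (D : List (ℕ × ℕ)) : Prop where
  skew : IsSkewRows D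
  hookBounded : HookBounded k D
  eq_nil_iff : D = [] ↔ l = []
  rowEnd_zero : rowEnd D 0 = l.length
  rowStart_top : D ≠ [] → rowStart D (D.length - 1) = 0
  colLen_eq : ∀ j (_ : j < l.length), colLen D j = l[j]
  largeOuterHooks : LargeOuterHooks k D
  rowLen_succ_le : ∀ i, i + 1 < D.length → rowLen D (i + 1) ≤ rowLen D i

namespace IsKSkewDiagramOf

variable {k i j : ℕ} {l : List ℕ} {D : List (ℕ × ℕ)}

lemma nil (k : ℕ) : IsKSkewDiagramOf k [] [] where
  skew := ⟨by simp, List.isChain_nil⟩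
  hookBounded _ _ hin := absurd hin.1 (by simp)
  eq_nil_iff := by simp
  rowEnd_zero := rfl
  rowStart_top := by simp
  colLen_eq _ hj := absurd hj (by simp)
  largeOuterHooks _ hi := absurd hi (by simp)
  rowLen_succ_le _ hi := absurd hi (by simp)

lemma colTop_zero (hD : IsKSkewDiagramOf k l D) (hne : D ≠ []) : colTop D 0 = D.length := by
  have hlen := List.length_pos_iff.mpr hne
  have := hD.skew.rowLen_pos (i := D.length - 1) (by omega)
  have := hD.rowStart_top hne
  have := lt_colTop (j := 0) (inDiag_iff.mpr ⟨(by omega : D.length - 1 < D.length), by omega,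
    by unfold rowEnd; omega⟩)
  have := colTop_le_length (D := D) (j := 0)
  omega

lemma inDiag_colBase (hD : IsKSkewDiagramOf k l D) (hl : ∀ x ∈ l, 0 < x) (hj : j < l.length) :
    InDiag D (colBase D j) j :=
  inDiag_colBase_of_colLen_pos (by rw [hD.colLen_eq j hj]; exact hl _ (List.getElem_mem hj))

lemma colsNonempty (hD : IsKSkewDiagramOf k l D) (hl : ∀ x ∈ l, 0 < x) : ColsNonempty D :=
  fun _ hj => ⟨_, hD.inDiag_colBase hl (by rwa [← hD.rowEnd_zero])⟩

lemma rowLen_le (hD : IsKSkewDiagramOf k l D) (hi : i < D.length) : rowLen D i ≤ k := by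
  have := hD.skew.rowLen_pos hi
  have hin : InDiag D i (rowStart D i) := inDiag_iff.mpr ⟨hi, le_rfl, by unfold rowEnd; omega⟩
  have := hD.hookBounded i _ hin
  rw [hookLen, armLen_eq, rowEnd] at this
  omega

end IsKSkewDiagramOf

section Construction

variable {k m h : ℕ} {rest : List ℕ} {D : List (ℕ × ℕ)}

lemma colValid_length (hD : IsSkewRows D) (hk : HookBounded k D) (hm : 0 < m) (hmk : m ≤ k) :
    ColValid k m D.length D :=
  (colValid_iff hD hk hm hmk).mpr
    ⟨⟨le_rfl, by omega, fun _ _ h => absurd h (by omega)⟩, fun h => absurd h (lt_irrefl _)⟩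

lemma Attachable.largeOuterHooks_addCol (hA : Attachable m h D) (hD : IsSkewRows D) (hm : 0 < m)
    (hrem : LargeOuterHooks k D) (hkey : 0 < h → k < rowLen D (h - 1) + m) :
    LargeOuterHooks k (addCol m h D) := by
  intro i hi j hj
  rw [hA.length_addCol] at hi
  rw [rowStart_addCol hi] at hj
  split_ifs at hj with hhi
  · omega
  have := hA.le_length
  have hiD : i < D.length := by omega
  rw [hA.rowEnd_addCol hi, if_pos hiD]
  cases j with
  | zero =>
    rw [(hA.col_addCol_zero hm).2.1]
    have := hD.rowEnd_antitone (show i ≤ h - 1 by omega) (by omega)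
    have := hkey (by omega)
    unfold rowEnd at *
    omega
  | succ j =>
    rw [hA.colTop_addCol_succ]
    have := hrem i hiD j (by omega)
    omega

lemma Attachable.rowLen_succ_le_addCol (hA : Attachable m h D) (hD : IsSkewRows D)
    (hdec : ∀ i, i + 1 < D.length → rowLen D (i + 1) ≤ rowLen D i)
    (hh : h < D.length → rowEnd D h + m ≤ k) (hkey : 0 < h → k < rowLen D (h - 1) + m) :
    ∀ i, i + 1 < (addCol m h D).length →
      rowLen (addCol m h D) (i + 1) ≤ rowLen (addCol m h D) i := by
  intro i hi
  rw [hA.length_addCol] at hi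
  have := hA.le_length
  have hrow := isSkewRows_iff.mp hD
  rw [rowLen_eq_sub, rowLen_eq_sub, rowStart_addCol hi, rowStart_addCol (by omega),
    hA.rowEnd_addCol hi, hA.rowEnd_addCol (by omega)]
  by_cases hih : i + 1 = h
  · subst hih
    have := hkey (by omega)
    rw [Nat.add_sub_cancel] at this
    have := hrow.1 i (by omega)
    unfold rowEnd at *
    split_ifs <;> omega
  · have := hdec i
    have := hrow.1 i
    have := hrow.1 (i + 1)
    have := hrow.2 i
    have := hA.rowStart_eq_zero i
    have := hA.rowStart_eq_zero (i + 1)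
    unfold rowEnd at *
    split_ifs <;> omega

lemma IsKSkewDiagramOf.lt_rowLen_add_of_not_colValid (hD : IsKSkewDiagramOf k rest D)
    (hrest : ∀ x ∈ rest, x ≤ m) (hm : 0 < m) (hmk : m ≤ k) (hA : Attachable m h D)
    (h0 : 0 < h) (hmin : ¬ ColValid k m (h - 1) D) : k < rowLen D (h - 1) + m := by
  have hlt : h - 1 < D.length := by have := hA.le_length; omega
  have hlen := hA.length_le
  have hpos := hD.skew.rowLen_pos hlt
  by_cases hs : rowStart D (h - 1) = 0
  · by_contra! hle
    refine hmin ((colValid_iff hD.skew hD.hookBounded hm hmk).mpr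
      ⟨⟨by omega, ?_, fun i hi hi' => ?_⟩, fun _ => by unfold rowEnd; omega⟩)
    · have hne : D ≠ [] := List.ne_nil_of_length_pos (by omega)
      have hrest0 : 0 < rest.length := List.length_pos_iff.mpr (mt hD.eq_nil_iff.mpr hne)
      have := colBase_le
        (inDiag_iff.mpr ⟨hlt, by omega, by unfold rowEnd; omega⟩ : InDiag D (h - 1) 0)
      have := hrest _ (List.getElem_mem hrest0)
      rw [← hD.colTop_zero hne, hD.skew.colTop_eq, hD.colLen_eq 0 hrest0]
      omega
    · rcases hi.eq_or_lt with rfl | hi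
      · exact hs
      · exact hA.rowStart_eq_zero i (by omega) hi'
  · have := hD.largeOuterHooks (h - 1) hlt (rowStart D (h - 1) - 1) (by omega)
    have := colTop_le_length (D := D) (j := rowStart D (h - 1) - 1)
    unfold rowEnd at *
    omega

lemma IsKSkewDiagramOf.kMul (hD : IsKSkewDiagramOf k rest D)
    (hl : IsKBoundedPartition k (m :: rest)) : IsKSkewDiagramOf k (m :: rest) (kMul k m D) := by
  obtain ⟨⟨hsorted, hpos⟩, hbdd⟩ := hl
  have hm : 0 < m := hpos m List.mem_cons_self
  have hmk : m ≤ k := hbdd m List.mem_cons_self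
  have hrest : ∀ x ∈ rest, x ≤ m := (List.pairwise_cons.mp hsorted).1
  have hv : ColValid k m (sInf {h | ColValid k m h D}) D :=
    Nat.sInf_mem (s := {h | ColValid k m h D})
      ⟨_, colValid_length hD.skew hD.hookBounded hm hmk⟩
  obtain ⟨hA, hh⟩ := (colValid_iff hD.skew hD.hookBounded hm hmk).mp hv
  have hkey h0 := hD.lt_rowLen_add_of_not_colValid hrest hm hmk hA h0
    (Nat.notMem_of_lt_sInf (Nat.sub_lt h0 one_pos))
  have hlen := hA.length_addCol
  unfold _root_.kMul
  set h := sInf {h | ColValid k m h D}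
  refine ⟨hv.2.1, hv.2.2, by simp [← List.length_eq_zero_iff, hlen]; omega, ?_, ?_, ?_,
    hA.largeOuterHooks_addCol hD.skew hm hD.largeOuterHooks hkey,
    hA.rowLen_succ_le_addCol hD.skew hD.rowLen_succ_le hh hkey⟩
  · rw [hA.rowEnd_addCol (by omega), List.length_cons]
    split_ifs with hD0
    · rw [hD.rowEnd_zero]
    · simp [hD.eq_nil_iff.mp (List.length_eq_zero_iff.mp (by omega))]
  · intro _
    rw [hlen, rowStart_addCol (by omega), if_pos (by omega)]
  · rintro (_ | j) hj
    · exact (hA.col_addCol_zero hm).2.2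
    · rw [hA.colLen_addCol_succ, hD.colLen_eq j _]
      rfl

end Construction

lemma isKSkewDiagramOf_kSkewDiagram {k : ℕ} {l : List ℕ} (hl : IsKBoundedPartition k l) :
    IsKSkewDiagramOf k l (kSkewDiagram k l) := by
  induction l with
  | nil => exact .nil k
  | cons m rest ih =>
    exact (ih hl.of_cons).kMul hl

noncomputable def transposeDiagram (D : List (ℕ × ℕ)) : List (ℕ × ℕ) :=
  (List.range (rowEnd D 0)).map fun j => (colBase D j, colLen D j)

section Transpose

variable {k : ℕ} {D : List (ℕ × ℕ)} {i i' j : ℕ}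

lemma transposeDiagram_nil : transposeDiagram [] = [] := rfl

lemma length_transposeDiagram : (transposeDiagram D).length = rowEnd D 0 := by
  simp [transposeDiagram]

lemma rowOf_transposeDiagram (hj : j < rowEnd D 0) :
    rowOf (transposeDiagram D) j = (colBase D j, colLen D j) := by
  rw [rowOf, List.getD_eq_getElem _ _ (by rwa [length_transposeDiagram])]
  simp [transposeDiagram]

lemma rowStart_transposeDiagram (hj : j < rowEnd D 0) :
    rowStart (transposeDiagram D) j = colBase D j := by
  rw [rowStart, rowOf_transposeDiagram hj]

lemma rowLen_transposeDiagram (hj : j < rowEnd D 0) :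
    rowLen (transposeDiagram D) j = colLen D j := by
  rw [rowLen, rowOf_transposeDiagram hj]

lemma IsSkewRows.rowEnd_transposeDiagram (hD : IsSkewRows D) (hj : j < rowEnd D 0) :
    rowEnd (transposeDiagram D) j = colTop D j := by
  rw [hD.colTop_eq, rowEnd, rowStart, rowLen, rowOf_transposeDiagram hj]

lemma IsSkewRows.inDiag_transposeDiagram (hD : IsSkewRows D) :
    InDiag (transposeDiagram D) j i ↔ InDiag D i j := by
  rw [inDiag_iff (D := transposeDiagram D), length_transposeDiagram]
  constructor
  · rintro ⟨hj, h₁, h₂⟩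
    rw [hD.rowEnd_transposeDiagram hj, rowStart, rowOf_transposeDiagram hj] at *
    exact hD.inDiag_iff_col.mpr ⟨h₁, h₂⟩
  · intro h
    have hj : j < rowEnd D 0 := h.2.2.trans_le (hD.rowEnd_antitone (Nat.zero_le i) h.1)
    rw [hD.rowEnd_transposeDiagram hj, rowStart, rowOf_transposeDiagram hj]
    exact ⟨hj, hD.inDiag_iff_col.mp h⟩

lemma IsSkewRows.colSet_transposeDiagram (hD : IsSkewRows D) (hi : i < D.length) :
    colSet (transposeDiagram D) i = Finset.Ico (rowStart D i) (rowEnd D i) := by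
  ext j
  rw [mem_colSet, hD.inDiag_transposeDiagram, inDiag_iff, Finset.mem_Ico]
  simp [hi]

lemma IsSkewRows.col_transposeDiagram (hD : IsSkewRows D) (hi : i < D.length) :
    colBase (transposeDiagram D) i = rowStart D i ∧ colTop (transposeDiagram D) i = rowEnd D i ∧
      colLen (transposeDiagram D) i = rowLen D i := by
  have := hD.rowLen_pos hi
  rw [rowLen_eq_sub]
  exact col_eq_of_colSet_eq_Ico (by unfold rowEnd; omega) (hD.colSet_transposeDiagram hi)

lemma IsSkewRows.hookBounded_transposeDiagram (hD : IsSkewRows D) (hk : HookBounded k D) :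
    HookBounded k (transposeDiagram D) := by
  intro j i hin
  have hinD := hD.inDiag_transposeDiagram.mp hin
  obtain ⟨hi, hs, he⟩ := inDiag_iff.mp hinD
  have hj : j < rowEnd D 0 := by have := hin.1; rwa [length_transposeDiagram] at this
  have := hk i j hinD
  rw [hD.hookLen_eq hinD] at this
  rw [hookLen, armLen_eq, hD.rowEnd_transposeDiagram hj,
    legLen_eq_of_colSet_eq_Ico (hD.colSet_transposeDiagram hi) hs]
  omega

lemma IsSkewRows.colBase_succ_le (hD : IsSkewRows D) (hi : InDiag D i j)
    (hi' : InDiag D i' (j + 1)) : colBase D (j + 1) ≤ colBase D j := by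
  obtain ⟨hb, hbs, -⟩ := inDiag_iff.mp (inDiag_colBase hi)
  obtain ⟨hb', -, hbe'⟩ := inDiag_iff.mp (inDiag_colBase hi')
  by_contra! hlt
  have := hD.rowEnd_antitone hlt.le hb'
  have := colBase_le (inDiag_iff.mpr ⟨hb, by omega, by omega⟩ : InDiag D (colBase D j) (j + 1))
  omega

lemma IsSkewRows.colTop_succ_le (hD : IsSkewRows D) (hi : InDiag D i j)
    (hi' : InDiag D i' (j + 1)) : colTop D (j + 1) ≤ colTop D j := by
  have htop := hD.inDiag_colTop_sub_one hi'
  obtain ⟨ht, -, hte⟩ := inDiag_iff.mp htop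
  have := lt_colTop hi'
  have := lt_colTop (inDiag_colBase hi)
  by_cases hs : rowStart D (colTop D (j + 1) - 1) ≤ j
  · have := lt_colTop (inDiag_iff.mpr ⟨ht, hs, by omega⟩ : InDiag D _ j)
    omega
  · have : colTop D (j + 1) - 1 < colBase D j := by
      by_contra! hle
      have := hD.rowStart_antitone hle ht
      have := (inDiag_iff.mp (inDiag_colBase hi)).2.1
      omega
    omega

lemma IsSkewRows.isSkewRows_transposeDiagram (hD : IsSkewRows D) (hcol : ColsNonempty D) :
    IsSkewRows (transposeDiagram D) := by
  rw [isSkewRows_iff, length_transposeDiagram]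
  refine ⟨fun j hj => ?_, fun j hj => ?_⟩
  · obtain ⟨i, hi⟩ := hcol j hj
    rw [rowLen_transposeDiagram hj, colLen]
    exact Finset.card_pos.mpr ⟨i, mem_colSet.mpr hi⟩
  · obtain ⟨i, hi⟩ := hcol j (by omega)
    obtain ⟨i', hi'⟩ := hcol (j + 1) hj
    rw [rowStart_transposeDiagram hj, rowStart_transposeDiagram (by omega),
      hD.rowEnd_transposeDiagram hj, hD.rowEnd_transposeDiagram (by omega)]
    exact ⟨hD.colBase_succ_le hi hi', hD.colTop_succ_le hi hi'⟩

lemma IsSkewRows.largeOuterHooks_transposeDiagram (hD : IsSkewRows D) (hcol : ColsNonempty D)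
    (h : LargeOuterHooks k D) : LargeOuterHooks k (transposeDiagram D) := by
  intro j hj i hi
  rw [length_transposeDiagram] at hj
  rw [rowStart_transposeDiagram hj] at hi
  obtain ⟨i₀, hi₀⟩ := hcol j hj
  obtain ⟨hb, -, hbe⟩ := inDiag_iff.mp (inDiag_colBase hi₀)
  have hiD : i < D.length := by omega
  have hji : j < rowStart D i := by
    by_contra! hle
    have := hD.rowEnd_antitone hi.le hb
    exact absurd (colBase_le (inDiag_iff.mpr ⟨hiD, hle, by omega⟩)) (by omega)
  have := h i hiD j hji
  rw [hD.rowEnd_transposeDiagram hj, (hD.col_transposeDiagram hiD).2.1]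
  omega

end Transpose

namespace IsKSkewDiagramOf

variable {k : ℕ} {l : List ℕ} {D : List (ℕ × ℕ)}

lemma isKBoundedPartition_rowLens (hD : IsKSkewDiagramOf k l D) :
    IsKBoundedPartition k (D.map Prod.snd) := by
  refine ⟨⟨List.isChain_iff_pairwise.mp (List.isChain_iff_getElem.mpr fun i hi => ?_), ?_⟩,
    ?_⟩
  · simp only [List.length_map] at hi
    have := hD.rowLen_succ_le i hi
    rw [rowLen, rowLen, rowOf_eq_getElem hi, rowOf_eq_getElem (by omega)] at this
    simpa only [List.getElem_map] using this
  all_goals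
    rw [List.forall_mem_map]
    intro _ hr
    obtain ⟨i, hi, rfl⟩ := List.getElem_of_mem hr
  · have := hD.skew.rowLen_pos hi
    rwa [rowLen, rowOf_eq_getElem hi] at this
  · have := hD.rowLen_le hi
    rwa [rowLen, rowOf_eq_getElem hi] at this

lemma map_snd_transposeDiagram (hD : IsKSkewDiagramOf k l D) :
    (transposeDiagram D).map Prod.snd = l := by
  apply List.ext_getElem
  · simp [length_transposeDiagram, hD.rowEnd_zero]
  · intro j _ hj
    simp [transposeDiagram, hD.colLen_eq j hj]

lemma transposeDiagram (hD : IsKSkewDiagramOf k l D) (hl : IsPartitionList l) :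
    IsKSkewDiagramOf k (D.map Prod.snd) (transposeDiagram D) := by
  obtain ⟨hsorted, hpos⟩ := hl
  have hsk := hD.skew
  have hcol := hD.colsNonempty hpos
  by_cases hne : D = []
  · subst hne
    rw [List.map_nil, transposeDiagram_nil]
    exact .nil k
  have hDpos := List.length_pos_iff.mpr hne
  have hw := hD.rowEnd_zero
  have hlenT := length_transposeDiagram (D := D)
  have hw0 : 0 < rowEnd D 0 := by
    have := hsk.rowLen_pos hDpos
    unfold rowEnd; omega
  refine ⟨hsk.isSkewRows_transposeDiagram hcol, hsk.hookBounded_transposeDiagram hD.hookBounded,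
    ?_, ?_, fun _ => ?_, fun i hi => ?_,
    hsk.largeOuterHooks_transposeDiagram hcol hD.largeOuterHooks, fun j hj => ?_⟩
  · simp [← List.length_eq_zero_iff, hlenT]
    omega
  · rw [hsk.rowEnd_transposeDiagram hw0, List.length_map, hD.colTop_zero hne]
  · rw [hlenT, rowStart_transposeDiagram (by omega)]
    have := hsk.rowLen_pos hDpos
    exact Nat.le_zero.mp
      (colBase_le (inDiag_iff.mpr ⟨hDpos, by unfold rowEnd; omega, by omega⟩))
  · rw [List.length_map] at hi
    rw [(hsk.col_transposeDiagram hi).2.2, List.getElem_map, rowLen, rowOf_eq_getElem hi]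
  · rw [hlenT] at hj
    rw [rowLen_transposeDiagram hj, rowLen_transposeDiagram (by omega), hD.colLen_eq j (by omega),
      hD.colLen_eq (j + 1) (by omega)]
    exact List.pairwise_iff_getElem.mp hsorted j (j + 1) _ _ (by omega)

end IsKSkewDiagramOf

def shiftRowLeft (r : ℕ × ℕ) : ℕ × ℕ := if r.1 = 0 then (0, r.2 - 1) else (r.1 - 1, r.2)

/-- The rows from the top of column `1` upwards are single cells in column `0`, so they are
dropped (see `IsSkewRows.lt_colTop_one_iff`). -/
noncomputable def dropFirstCol (D : List (ℕ × ℕ)) : List (ℕ × ℕ) :=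
  (D.take (colTop D 1)).map shiftRowLeft

section DropFirstCol

variable {k : ℕ} {D : List (ℕ × ℕ)} {i j : ℕ}

lemma length_dropFirstCol : (dropFirstCol D).length = colTop D 1 := by
  simp [dropFirstCol, colTop_le_length]

lemma rowOf_dropFirstCol (hi : i < colTop D 1) :
    rowOf (dropFirstCol D) i = shiftRowLeft (rowOf D i) := by
  have := colTop_le_length (D := D) (j := 1)
  rw [rowOf, List.getD_eq_getElem _ _ (by rwa [length_dropFirstCol]), rowOf_eq_getElem (by omega)]
  simp [dropFirstCol]

lemma rowStart_dropFirstCol (hi : i < colTop D 1) :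
    rowStart (dropFirstCol D) i = rowStart D i - 1 := by
  rw [rowStart, rowOf_dropFirstCol hi, shiftRowLeft, rowStart]
  split_ifs <;> simp [*]

lemma rowEnd_dropFirstCol (hi : i < colTop D 1) :
    rowEnd (dropFirstCol D) i = rowEnd D i - 1 := by
  rw [rowEnd, rowStart, rowLen, rowOf_dropFirstCol hi, shiftRowLeft, rowEnd, rowStart, rowLen]
  split_ifs <;> simp only [*] <;> omega


lemma IsSkewRows.isSkewRows_dropFirstCol (hD : IsSkewRows D) : IsSkewRows (dropFirstCol D) := by
  have hrow := isSkewRows_iff.mp hD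
  have hlen := colTop_le_length (D := D) (j := 1)
  rw [isSkewRows_iff, length_dropFirstCol]
  refine ⟨fun i hi => ?_, fun i hi => ?_⟩
  · obtain ⟨i₀, hi₀⟩ := colTop_pos_iff.mp (by omega : 0 < colTop D 1)
    have := (hD.lt_colTop_iff hi₀ (by omega)).mp hi
    rw [rowLen_eq_sub, rowStart_dropFirstCol hi, rowEnd_dropFirstCol hi]
    have := hrow.1 i (by omega)
    unfold rowEnd at *
    omega
  · rw [rowStart_dropFirstCol hi, rowStart_dropFirstCol (by omega), rowEnd_dropFirstCol hi,
      rowEnd_dropFirstCol (by omega)]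
    have := hrow.2 i (by omega)
    omega

lemma IsSkewRows.lt_colTop_one_iff (hD : IsSkewRows D) (hcol : ColsNonempty D)
    (hi : i < D.length) : i < colTop D 1 ↔ 1 < rowEnd D i := by
  by_cases h1 : ∃ i, InDiag D i 1
  · obtain ⟨i₀, hi₀⟩ := h1
    exact hD.lt_colTop_iff hi₀ hi
  · have := hD.rowEnd_antitone (Nat.zero_le i) hi
    have := mt colTop_pos_iff.mp h1
    constructor <;> intro h
    · omega
    · exact absurd (hcol 1 (by omega)) h1

lemma IsSkewRows.inDiag_dropFirstCol (hD : IsSkewRows D) (hcol : ColsNonempty D) :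
    InDiag (dropFirstCol D) i j ↔ InDiag D i (j + 1) := by
  have hlen := colTop_le_length (D := D) (j := 1)
  rw [inDiag_iff, inDiag_iff, length_dropFirstCol]
  constructor
  · rintro ⟨hi, hs, he⟩
    rw [rowStart_dropFirstCol hi] at hs
    rw [rowEnd_dropFirstCol hi] at he
    exact ⟨by omega, by omega, by omega⟩
  · rintro ⟨hi, hs, he⟩
    have hi' := (hD.lt_colTop_one_iff hcol hi).mpr (by omega)
    rw [rowStart_dropFirstCol hi', rowEnd_dropFirstCol hi']
    exact ⟨hi', by omega, by omega⟩

lemma IsSkewRows.colSet_dropFirstCol (hD : IsSkewRows D) (hcol : ColsNonempty D) :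
    colSet (dropFirstCol D) j = colSet D (j + 1) :=
  colSet_congr fun _ => hD.inDiag_dropFirstCol hcol

lemma IsSkewRows.hookLen_dropFirstCol (hD : IsSkewRows D) (hcol : ColsNonempty D)
    (h : InDiag (dropFirstCol D) i j) : hookLen (dropFirstCol D) i j = hookLen D i (j + 1) := by
  have h' := (hD.inDiag_dropFirstCol hcol).mp h
  have hi : i < colTop D 1 := by have := h.1; rwa [length_dropFirstCol] at this
  rw [hD.isSkewRows_dropFirstCol.hookLen_eq h, hD.hookLen_eq h', rowEnd_dropFirstCol hi, colTop,
    colTop, hD.colSet_dropFirstCol hcol]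
  have := (inDiag_iff.mp h').2.2
  omega

lemma IsSkewRows.largeOuterHooks_dropFirstCol (hD : IsSkewRows D) (hcol : ColsNonempty D)
    (h : LargeOuterHooks k D) : LargeOuterHooks k (dropFirstCol D) := by
  intro i hi j hj
  rw [length_dropFirstCol] at hi
  rw [rowStart_dropFirstCol hi] at hj
  have := colTop_le_length (D := D) (j := 1)
  have := h i (by omega) (j + 1) (by omega)
  have := (hD.lt_colTop_one_iff hcol (by omega)).mp hi
  rw [rowEnd_dropFirstCol hi, colTop, hD.colSet_dropFirstCol hcol, ← colTop]
  omega

lemma IsSkewRows.rowLen_succ_le_dropFirstCol (hD : IsSkewRows D)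
    (hdec : ∀ i, i + 1 < D.length → rowLen D (i + 1) ≤ rowLen D i) :
    ∀ i, i + 1 < (dropFirstCol D).length →
      rowLen (dropFirstCol D) (i + 1) ≤ rowLen (dropFirstCol D) i := by
  intro i hi
  rw [length_dropFirstCol] at hi
  have := colTop_le_length (D := D) (j := 1)
  have hrow := isSkewRows_iff.mp hD
  rw [rowLen_eq_sub, rowLen_eq_sub, rowStart_dropFirstCol hi, rowStart_dropFirstCol (by omega),
    rowEnd_dropFirstCol hi, rowEnd_dropFirstCol (by omega)]
  have := hdec i (by omega)
  have := hrow.1 i (by omega)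
  have := hrow.1 (i + 1) (by omega)
  have := hrow.2 i (by omega)
  unfold rowEnd at *
  omega

lemma IsSkewRows.attachable_dropFirstCol (hD : IsSkewRows D) (hcol : ColsNonempty D)
    (htop : colTop D 0 = D.length) :
    Attachable (colLen D 0) (colBase D 0) (dropFirstCol D) := by
  have hlen := colTop_le_length (D := D) (j := 1)
  have h0 := hD.colTop_eq 0
  refine ⟨?_, by rw [length_dropFirstCol]; omega, fun i hi hi' => ?_⟩
  · rw [length_dropFirstCol]
    by_cases ha : colBase D 0 = 0
    · omega
    have hlt : colBase D 0 - 1 < D.length := by omega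
    have := hD.rowLen_pos hlt
    have : rowStart D (colBase D 0 - 1) ≠ 0 := fun hs =>
      absurd (colBase_le (inDiag_iff.mpr ⟨hlt, hs.le, by unfold rowEnd; omega⟩)) (by omega)
    have := (hD.lt_colTop_one_iff hcol hlt).mpr (by unfold rowEnd; omega)
    omega
  · rw [length_dropFirstCol] at hi'
    rw [rowStart_dropFirstCol hi']
    have := (inDiag_iff.mp (hD.inDiag_iff_col.mpr ⟨hi, (by omega : i < colTop D 0)⟩)).2.1
    omega

lemma IsSkewRows.addCol_dropFirstCol (hD : IsSkewRows D) (hcol : ColsNonempty D)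
    (htop : colTop D 0 = D.length) :
    addCol (colLen D 0) (colBase D 0) (dropFirstCol D) = D := by
  have hA := hD.attachable_dropFirstCol hcol htop
  have ham : colBase D 0 + colLen D 0 = D.length := by rw [← hD.colTop_eq, htop]
  have hlen : (addCol (colLen D 0) (colBase D 0) (dropFirstCol D)).length = D.length := by
    rw [hA.length_addCol, ham]
  refine List.ext_getElem hlen fun i hi hi' => ?_
  rw [← rowOf_eq_getElem hi, ← rowOf_eq_getElem hi',
    rowOf_addCol (by rwa [← _root_.length_addCol]),
    show rowOf D i = (rowStart D i, rowLen D i) from rfl, length_dropFirstCol]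
  have hL := hD.rowLen_pos hi'
  have hcolTop := hD.lt_colTop_one_iff hcol hi'
  have hcol0 := (hD.inDiag_iff_col (i := i) (j := 0)).symm
  rw [htop, inDiag_iff] at hcol0
  unfold rowEnd at hcolTop hcol0
  split_ifs with h₁ h₂
  · rw [rowEnd_dropFirstCol h₂, rowEnd]
    ext <;> simp only <;> omega
  · ext <;> simp only <;> omega
  · have hi₁ : i < colTop D 1 := by omega
    rw [rowStart_dropFirstCol hi₁, rowLen_eq_sub, rowStart_dropFirstCol hi₁,
      rowEnd_dropFirstCol hi₁, rowEnd]
    ext <;> simp only <;> omega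

end DropFirstCol

namespace IsKSkewDiagramOf

variable {k m h : ℕ} {l rest : List ℕ} {D : List (ℕ × ℕ)}

lemma dropFirstCol (hD : IsKSkewDiagramOf k (m :: rest) D) (hl : ∀ x ∈ m :: rest, 0 < x) :
    IsKSkewDiagramOf k rest (dropFirstCol D) := by
  have hsk := hD.skew
  have hcol := hD.colsNonempty hl
  have hne : D ≠ [] := mt hD.eq_nil_iff.mp (List.cons_ne_nil m rest)
  have hwide : 0 < colTop D 1 ↔ rest ≠ [] := by
    rw [hsk.lt_colTop_one_iff hcol (List.length_pos_iff.mpr hne), hD.rowEnd_zero,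
      List.length_cons, Nat.lt_add_left_iff_pos, List.length_pos_iff]
  refine ⟨hsk.isSkewRows_dropFirstCol, fun i j h => ?_, ?_, ?_, fun hne' => ?_, fun j hj => ?_,
    hsk.largeOuterHooks_dropFirstCol hcol hD.largeOuterHooks,
    hsk.rowLen_succ_le_dropFirstCol hD.rowLen_succ_le⟩
  · rw [hsk.hookLen_dropFirstCol hcol h]
    exact hD.hookBounded i (j + 1) ((hsk.inDiag_dropFirstCol hcol).mp h)
  · rw [← List.length_eq_zero_iff, length_dropFirstCol, ← not_iff_not]
    exact Nat.pos_iff_ne_zero.symm.trans hwide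
  · by_cases h0 : 0 < colTop D 1
    · rw [rowEnd_dropFirstCol h0, hD.rowEnd_zero, List.length_cons, Nat.add_sub_cancel]
    · have hnil : rest = [] := not_not.mp (mt hwide.mpr h0)
      have : _root_.dropFirstCol D = [] :=
        List.length_eq_zero_iff.mp (by rw [length_dropFirstCol]; omega)
      rw [this, hnil]
      rfl
  · have h0 : 0 < colTop D 1 := by
      rw [← length_dropFirstCol]
      exact List.length_pos_iff.mpr hne'
    obtain ⟨i₀, hi₀⟩ := colTop_pos_iff.mp h0
    rw [length_dropFirstCol, rowStart_dropFirstCol (by omega)]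
    have := (inDiag_iff.mp (hsk.inDiag_colTop_sub_one hi₀)).2.1
    omega
  · rw [colLen, hsk.colSet_dropFirstCol hcol, ← colLen, hD.colLen_eq (j + 1) (by simpa using hj),
      List.getElem_cons_succ]

lemma colLen_zero (hD : IsKSkewDiagramOf k (m :: rest) D) : colLen D 0 = m :=
  hD.colLen_eq 0 (by simp)

lemma attachable_dropFirstCol (hD : IsKSkewDiagramOf k (m :: rest) D)
    (hl : ∀ x ∈ m :: rest, 0 < x) : Attachable m (colBase D 0) (_root_.dropFirstCol D) := by
  have hne : D ≠ [] := mt hD.eq_nil_iff.mp (List.cons_ne_nil m rest)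
  have := hD.skew.attachable_dropFirstCol (hD.colsNonempty hl) (hD.colTop_zero hne)
  rwa [hD.colLen_zero] at this

lemma colValid_colBase_dropFirstCol (hD : IsKSkewDiagramOf k (m :: rest) D)
    (hl : IsKBoundedPartition k (m :: rest)) :
    ColValid k m (colBase D 0) (_root_.dropFirstCol D) := by
  have hD' := hD.dropFirstCol hl.1.2
  refine (colValid_iff hD'.skew hD'.hookBounded (hl.1.2 m (by simp)) (hl.2 m (by simp))).mpr
    ⟨hD.attachable_dropFirstCol hl.1.2, fun ha => ?_⟩
  rw [length_dropFirstCol] at ha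
  rw [rowEnd_dropFirstCol ha]
  have hin := hD.inDiag_colBase hl.1.2 (j := 0) (by simp)
  have := hD.hookBounded _ _ hin
  rw [hD.skew.hookLen_eq hin, hD.skew.colTop_eq, hD.colLen_zero] at this
  have := (inDiag_iff.mp hin).2.2
  omega

lemma not_colValid_dropFirstCol_of_lt (hD : IsKSkewDiagramOf k (m :: rest) D)
    (hl : IsKBoundedPartition k (m :: rest)) (hh : h < colBase D 0) :
    ¬ ColValid k m h (_root_.dropFirstCol D) := by
  intro hv
  have hD' := hD.dropFirstCol hl.1.2
  have hsk := hD.skew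
  have hle := (hD.attachable_dropFirstCol hl.1.2).le_length
  rw [length_dropFirstCol] at hle
  have hbound := ((colValid_iff hD'.skew hD'.hookBounded (hl.1.2 m (by simp)) (hl.2 m (by simp))).mp
    hv).2
  rw [length_dropFirstCol, rowEnd_dropFirstCol (by omega)] at hbound
  have hlt : colBase D 0 - 1 < D.length := by have := colTop_le_length (D := D) (j := 1); omega
  have hs : 0 < rowStart D (colBase D 0 - 1) := by
    by_contra! hs
    have := hsk.rowLen_pos hlt
    exact absurd (colBase_le (inDiag_iff.mpr ⟨hlt, hs, by unfold rowEnd; omega⟩)) (by omega)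
  have hhook := hD.largeOuterHooks _ hlt 0 hs
  rw [hsk.colTop_eq, hD.colLen_zero] at hhook
  have := hsk.rowEnd_antitone (show h ≤ colBase D 0 - 1 by omega) hlt
  omega

lemma sInf_colValid_dropFirstCol (hD : IsKSkewDiagramOf k (m :: rest) D)
    (hl : IsKBoundedPartition k (m :: rest)) :
    sInf {h | ColValid k m h (_root_.dropFirstCol D)} = colBase D 0 :=
  le_antisymm (Nat.sInf_le (hD.colValid_colBase_dropFirstCol hl)) (not_lt.mp fun hlt =>
    hD.not_colValid_dropFirstCol_of_lt hl hlt
      (Nat.sInf_mem (s := {h | ColValid k m h (_root_.dropFirstCol D)})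
        ⟨_, hD.colValid_colBase_dropFirstCol hl⟩))

lemma eq_kSkewDiagram (hD : IsKSkewDiagramOf k l D) (hl : IsKBoundedPartition k l) :
    D = kSkewDiagram k l := by
  induction l generalizing D with
  | nil => exact hD.eq_nil_iff.mpr rfl
  | cons m rest ih =>
    have hne : D ≠ [] := mt hD.eq_nil_iff.mp (List.cons_ne_nil m rest)
    calc D = addCol m (colBase D 0) (_root_.dropFirstCol D) := by
          rw [← hD.colLen_zero, hD.skew.addCol_dropFirstCol (hD.colsNonempty hl.1.2) (hD.colTop_zero hne)]
      _ = _root_.kMul k m (_root_.dropFirstCol D) := by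
          rw [_root_.kMul, hD.sInf_colValid_dropFirstCol hl]
      _ = kSkewDiagram k (m :: rest) := by rw [ih (hD.dropFirstCol hl.1.2) hl.of_cons]; rfl

end IsKSkewDiagramOf

theorem kConjugate_involutive_general (k : ℕ) (l : List ℕ)
    (hl : IsKBoundedPartition k l) :
    kConjugate k (kConjugate k l) = l := by
  have hD := isKSkewDiagramOf_kSkewDiagram hl
  have hT := hD.transposeDiagram hl.1
  calc kConjugate k (kConjugate k l)
      = (transposeDiagram (kSkewDiagram k l)).map Prod.snd := by
        rw [kConjugate, kConjugate, ← hT.eq_kSkewDiagram hD.isKBoundedPartition_rowLens]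
    _ = l := hD.map_snd_transposeDiagram

/-- For every positive integer `k` and every `k`-bounded partition
`λ`, the `k`-conjugation is an involution: `(λ^{ω_k})^{ω_k} = λ`. -/
theorem kConjugate_involutive (k : ℕ) (hk : 0 < k) (l : List ℕ)
    (hl : IsKBoundedPartition k l) :
    kConjugate k (kConjugate k l) = l :=
  kConjugate_involutive_general k l hl
end

section
/- Let k be a positive integer, R = ℚ[h_1,…,h_k], and I_k the ideal of R generated by the k-rectangular Schur polynomials S_{(ℓ^{k+1−ℓ})} for ℓ = 1,…,k. Then the images in the quotient ring R/I_k of the products h_λ = h_{λ_1}⋯h_{λ_n}, as λ ranges over all k-irreducible partitions, form a basis of R/I_k as a ℚ-vector space. -/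
open MvPolynomial

/-- A `k`-bounded partition is `k`-irreducible if, for each `j = 1, …, k`, it has
at most `k - j` parts equal to `j` (in particular no part equal to `k`). -/
def IsKIrreducible (k : ℕ) (l : List ℕ) : Prop :=
  IsKBoundedPartition k l ∧ ∀ j, 1 ≤ j → j ≤ k → l.count j ≤ k - j

/-- The generator `h_m` of `R = ℚ[h_1, …, h_k]` (realized as the polynomial ring
in the `k` indeterminates `X 0 = h_1, …, X (k-1) = h_k`), with the conventions
`h_0 = 1` and `h_m = 0` for `m < 0` or `m > k`. -/
noncomputable def hElem (k : ℕ) (m : ℤ) : MvPolynomial (Fin k) ℚ :=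
  if hm : 1 ≤ m ∧ m ≤ (k : ℤ) then X ⟨m.toNat - 1, by omega⟩
  else if m = 0 then 1 else 0

/-- The `k`-rectangular Schur polynomial `S_{(ℓ^{k+1-ℓ})}`, given by the
Jacobi–Trudi determinant `det (h_{ℓ - i + j})_{1 ≤ i, j ≤ k+1-ℓ}`. -/
noncomputable def rectSchur (k ℓ : ℕ) : MvPolynomial (Fin k) ℚ :=
  (Matrix.of fun i j : Fin (k + 1 - ℓ) =>
    hElem k ((ℓ : ℤ) - (((i : ℕ) : ℤ) + 1) + (((j : ℕ) : ℤ) + 1))).det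

/-- The ideal `I_k` of `R = ℚ[h_1, …, h_k]` generated by the `k`-rectangular
Schur polynomials `S_{(ℓ^{k+1-ℓ})}`, `ℓ = 1, …, k`. -/
noncomputable def rectIdeal (k : ℕ) : Ideal (MvPolynomial (Fin k) ℚ) :=
  Ideal.span (rectSchur k '' Set.Icc 1 k)

/-- For a `k`-bounded partition `λ = (λ_1, …, λ_n)`, the product
`h_λ = h_{λ_1} ⋯ h_{λ_n}`. -/
noncomputable def hProd (k : ℕ) (l : List ℕ) : MvPolynomial (Fin k) ℚ :=
  (l.map fun m => hElem k (m : ℤ)).prod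

/-!
Grade monomials in `h₁, …, h_k` by `μ(λ) = k |λ| - ∑ λᵢ²`. The Jacobi–Trudi determinant of the
`k`-rectangle `(ℓ^(k+1-ℓ))` is `h_ℓ^(k+1-ℓ)` plus terms of strictly smaller `μ`: the term of a
permutation `σ` is `∏ᵢ h_{ℓ+i-σ(i)}`, whose parts have the same sum but whose sum of squares is
larger by `∑ᵢ (i - σ(i))² > 0`.

Dividing the multiplicity of each part `j` by `k + 1 - j` splits every `k`-bounded partition
uniquely into a `k`-irreducible partition `ρ` and a union of `k`-rectangles. The corresponding
products `∏ S_{rectangle} · h_ρ` are therefore unitriangular with respect to the monomial basis,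
so they form a basis of `R`. Those containing at least one rectangle factor span exactly `I_k`,
hence the `h_ρ` with `ρ` `k`-irreducible give a basis of `R/I_k`.
-/

namespace Module.Basis

variable {ι R M : Type*} [Ring R] [AddCommGroup M] [Module R M]

section Unitriangular

variable (b : Basis ι R M) (μ : ι → ℕ) {f : ι → M}
  (hf : ∀ i, f i - b i ∈ Submodule.span R (b '' {j | μ j < μ i}))
include hf

theorem repr_apply_of_sub_mem_span_lt {i j : ι} (hij : ¬μ j < μ i) :
    b.repr (f i) j = Finsupp.single i 1 j := by
  have hsub : ↑(b.repr (f i - b i)).support ⊆ {j | μ j < μ i} := b.mem_span_image.1 (hf i)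
  by_contra h
  apply hij
  apply hsub
  rwa [Finset.mem_coe, Finsupp.mem_support_iff, map_sub, Finsupp.sub_apply, b.repr_self,
    sub_ne_zero]

theorem linearIndependent_of_sub_mem_span_lt : LinearIndependent R f := by
  classical
  rw [linearIndependent_iff']
  intro s g hsum i his
  by_contra hgi
  obtain ⟨p, hp, hmax⟩ := (s.filter (g · ≠ 0)).exists_max_image μ ⟨i, by simp [his, hgi]⟩
  rw [Finset.mem_filter] at hp
  have hcoord : ∀ q ∈ s, g q * b.repr (f q) p = if q = p then g p else 0 := by
    intro q hq
    by_cases hgq : g q = 0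
    · split_ifs with h
      · simp [hgq, ← h]
      · simp [hgq]
    · rw [b.repr_apply_of_sub_mem_span_lt μ hf
        (not_lt.2 (hmax q (Finset.mem_filter.2 ⟨hq, hgq⟩))), Finsupp.single_apply]
      split_ifs <;> simp_all
  have := congrArg (fun x => b.repr x p) hsum
  simp only [map_sum, map_smul, Finsupp.coe_finsetSum, Finset.sum_apply, Finsupp.smul_apply,
    smul_eq_mul, map_zero, Finsupp.coe_zero, Pi.zero_apply] at this
  rw [Finset.sum_congr rfl hcoord, Finset.sum_ite_eq' s p, if_pos hp.1] at this
  exact hp.2 this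

theorem span_eq_top_of_sub_mem_span_lt : Submodule.span R (Set.range f) = ⊤ := by
  have hb : ∀ n i, μ i = n → b i ∈ Submodule.span R (Set.range f) := by
    intro n
    induction n using Nat.strong_induction_on with
    | _ n ih =>
      rintro i rfl
      have hlow : Submodule.span R (b '' {j | μ j < μ i}) ≤ Submodule.span R (Set.range f) :=
        Submodule.span_le.2 <| Set.image_subset_iff.2 fun j hj => ih _ hj j rfl
      rw [← sub_sub_cancel (f i) (b i)]
      exact Submodule.sub_mem _ (Submodule.subset_span ⟨i, rfl⟩) (hlow (hf i))
  rw [eq_top_iff, ← b.span_eq, Submodule.span_le]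
  rintro _ ⟨i, rfl⟩
  exact hb _ i rfl

noncomputable def unitriangular : Basis ι R M :=
  .mk (b.linearIndependent_of_sub_mem_span_lt μ hf)
    (b.span_eq_top_of_sub_mem_span_lt μ hf).ge

@[simp]
theorem unitriangular_apply (i : ι) : b.unitriangular μ hf i = f i :=
  Basis.mk_apply _ _ _

end Unitriangular

noncomputable def quotientSpanCompl (b : Basis ι R M) (s : Set ι) :
    Basis s R (M ⧸ Submodule.span R (b '' sᶜ)) :=
  .mk (v := fun i => Submodule.Quotient.mk (b i))
    ((b.linearIndependent.comp _ Subtype.val_injective).map (f := Submodule.mkQ _) <| by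
      rw [Submodule.ker_mkQ, Set.range_comp, Subtype.range_coe]
      exact b.linearIndependent.disjoint_span_image disjoint_compl_right)
    (by
      have hrange : (Set.range fun i : s => Submodule.Quotient.mk (b i)) =
          (Submodule.span R (b '' sᶜ)).mkQ '' (b '' s) := by
        ext; simp
      rw [hrange, Submodule.span_image, top_le_iff, Submodule.map_mkQ_eq_top,
        ← Submodule.span_union, ← Set.image_union, Set.compl_union_self, Set.image_univ,
        b.span_eq])

@[simp]
theorem quotientSpanCompl_apply (b : Basis ι R M) (s : Set ι) (i : s) :
    b.quotientSpanCompl s i = Submodule.Quotient.mk (b i) :=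
  Basis.mk_apply _ _ _

end Module.Basis

open Finsupp (weight single)

namespace MvPolynomial

variable {σ R : Type*} (w : σ → ℕ)

section CommSemiring

variable [CommSemiring R]

theorem mul_mem_restrictSupport_weight_lt {p q : MvPolynomial σ R} {m n : ℕ}
    (hp : p ∈ restrictSupport R {u | weight w u < m})
    (hq : q ∈ restrictSupport R {u | weight w u ≤ n}) :
    p * q ∈ restrictSupport R {u | weight w u < m + n} := by
  have hpq := Submodule.mul_mem_mul hp hq
  rw [← restrictSupport_add] at hpq
  refine restrictSupport_mono R (Set.add_subset_iff.2 fun u hu v hv => ?_) hpq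
  simp only [Set.mem_ofPred_eq, map_add] at hu hv ⊢
  omega

end CommSemiring

variable [CommRing R]

def HasLeadingMonomial (p : MvPolynomial σ R) (a : σ →₀ ℕ) : Prop :=
  p - monomial a 1 ∈ restrictSupport R {u | weight w u < weight w a}

variable {w}

theorem hasLeadingMonomial_monomial (a : σ →₀ ℕ) :
    HasLeadingMonomial w (monomial a (1 : R)) a := by
  simp [HasLeadingMonomial]

theorem HasLeadingMonomial.mem_restrictSupport_le {p : MvPolynomial σ R} {a : σ →₀ ℕ}
    (hp : HasLeadingMonomial w p a) : p ∈ restrictSupport R {u | weight w u ≤ weight w a} := by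
  have hle : {u : σ →₀ ℕ | weight w u < weight w a} ⊆ {u | weight w u ≤ weight w a} :=
    fun _ hu => Set.mem_ofPred.2 (le_of_lt hu)
  rw [← sub_add_cancel p (monomial a 1)]
  exact Submodule.add_mem _ (restrictSupport_mono R hle hp) (by simp)

theorem HasLeadingMonomial.mul {p q : MvPolynomial σ R} {a b : σ →₀ ℕ}
    (hp : HasLeadingMonomial w p a) (hq : HasLeadingMonomial w q b) :
    HasLeadingMonomial w (p * q) (a + b) := by
  have hsplit : p * q - monomial (a + b) 1 =
      (p - monomial a 1) * q + (q - monomial b 1) * monomial a 1 := by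
    rw [show monomial (a + b) (1 : R) = monomial a 1 * monomial b 1 by simp]
    ring
  rw [HasLeadingMonomial, hsplit, map_add]
  refine Submodule.add_mem _ (mul_mem_restrictSupport_weight_lt w hp hq.mem_restrictSupport_le) ?_
  rw [add_comm (weight w a)]
  exact mul_mem_restrictSupport_weight_lt w hq
    (hasLeadingMonomial_monomial a).mem_restrictSupport_le

theorem HasLeadingMonomial.pow {p : MvPolynomial σ R} {a : σ →₀ ℕ}
    (hp : HasLeadingMonomial w p a) (n : ℕ) : HasLeadingMonomial w (p ^ n) (n • a) := by
  induction n with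
  | zero => simpa using hasLeadingMonomial_monomial (R := R) (w := w) 0
  | succ n ih => rw [pow_succ, succ_nsmul]; exact ih.mul hp

theorem HasLeadingMonomial.prod {ι : Type*} (s : Finset ι) {p : ι → MvPolynomial σ R}
    {a : ι → σ →₀ ℕ} (hp : ∀ i ∈ s, HasLeadingMonomial w (p i) (a i)) :
    HasLeadingMonomial w (∏ i ∈ s, p i) (∑ i ∈ s, a i) := by
  classical
  induction s using Finset.induction_on with
  | empty => simpa using hasLeadingMonomial_monomial (R := R) (w := w) 0
  | insert i s hi ih =>
    rw [Finset.prod_insert hi, Finset.sum_insert hi]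
    exact (hp i (Finset.mem_insert_self i s)).mul
      (ih fun j hj => hp j (Finset.mem_insert_of_mem hj))

end MvPolynomial

section Rectangles

variable {k : ℕ}

/-- On the exponent vector of a `k`-bounded partition `λ`, `weight (rectWeight k)` is
`k |λ| - ∑ λᵢ²`. -/
def rectWeight (k : ℕ) (i : Fin k) : ℕ := (i + 1) * (k - (i + 1))

theorem hElem_natCast_succ (i : Fin k) : hElem k ((i + 1 : ℕ) : ℤ) = X i := by
  rw [hElem, dif_pos (by omega)]
  congr

theorem hElem_eq_zero_or_monomial (m : ℤ) :
    hElem k m = 0 ∨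
      ∃ u, hElem k m = monomial u 1 ∧ (weight (rectWeight k) u : ℤ) = m * (k - m) := by
  by_cases hm : 1 ≤ m ∧ m ≤ k
  · set i : Fin k := ⟨m.toNat - 1, by omega⟩
    have hi : m = ((i + 1 : ℕ) : ℤ) := by simp [i]; omega
    refine .inr ⟨single i 1, by rw [hi, hElem_natCast_succ]; rfl, ?_⟩
    rw [Finsupp.weight_single, rectWeight, hi, one_smul]
    push_cast [show (i : ℕ) + 1 ≤ k from i.isLt]
    ring
  · by_cases h0 : m = 0
    · exact .inr ⟨0, by simp [hElem, h0], by simp [h0]⟩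
    · exact .inl (by rw [hElem, dif_neg hm, if_neg h0])

theorem prod_hElem_eq_zero_or_monomial {ι : Type*} (s : Finset ι) (a : ι → ℤ) :
    ∏ i ∈ s, hElem k (a i) = 0 ∨
      ∃ u, ∏ i ∈ s, hElem k (a i) = monomial u 1 ∧
        (weight (rectWeight k) u : ℤ) = ∑ i ∈ s, a i * (k - a i) := by
  classical
  induction s using Finset.induction_on with
  | empty => exact .inr ⟨0, by simp, by simp⟩
  | insert i s hi ih =>
    rw [Finset.prod_insert hi, Finset.sum_insert hi]
    obtain h | ⟨v, hv, hwv⟩ := hElem_eq_zero_or_monomial (k := k) (a i)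
    · exact .inl (by rw [h, zero_mul])
    obtain h | ⟨u, hu, hwu⟩ := ih
    · exact .inl (by rw [h, mul_zero])
    exact .inr ⟨v + u, by rw [hv, hu, monomial_mul, one_mul], by push_cast [map_add, hwv, hwu]; rfl⟩

theorem sum_sub_perm_eq_zero {N : ℕ} (σ : Equiv.Perm (Fin N)) :
    ∑ i : Fin N, (((i : ℕ) : ℤ) - (σ i : ℕ)) = 0 := by
  rw [Finset.sum_sub_distrib, Equiv.sum_comp σ (fun j : Fin N => ((j : ℕ) : ℤ)), sub_self]

theorem sum_sq_sub_perm_pos {N : ℕ} {σ : Equiv.Perm (Fin N)} (hσ : σ ≠ 1) :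
    0 < ∑ i : Fin N, (((i : ℕ) : ℤ) - (σ i : ℕ)) ^ 2 := by
  obtain ⟨i, hi⟩ : ∃ i, σ i ≠ i := by
    by_contra! h
    exact hσ (Equiv.ext h)
  refine Finset.sum_pos' (fun _ _ => sq_nonneg _) ⟨i, Finset.mem_univ _, ?_⟩
  have : ((i : ℕ) : ℤ) - (σ i : ℕ) ≠ 0 := by
    rw [sub_ne_zero, Ne, Nat.cast_inj, ← Fin.ext_iff]
    exact hi.symm
  positivity


theorem prod_hElem_perm_mem_restrictSupport (ℓ : ℤ) {N : ℕ} {σ : Equiv.Perm (Fin N)}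
    (hσ : σ ≠ 1) :
    ∏ j : Fin N, hElem k (ℓ + (((j : ℕ) : ℤ) - (σ j : ℕ))) ∈
      restrictSupport ℚ {u | (weight (rectWeight k) u : ℤ) < N * (ℓ * (k - ℓ))} := by
  set b : Fin N → ℤ := fun j => ((j : ℕ) : ℤ) - (σ j : ℕ)
  obtain h | ⟨u, hu, hwu⟩ := prod_hElem_eq_zero_or_monomial Finset.univ (fun j => ℓ + b j)
  · rw [h]
    exact zero_mem _
  rw [hu, monomial_mem_restrictSupport]
  left
  have hexpand : ∀ j, (ℓ + b j) * (k - (ℓ + b j)) =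
      ℓ * (k - ℓ) + (k - 2 * ℓ) * b j - b j ^ 2 := fun j => by ring
  have hwu' : (weight (rectWeight k) u : ℤ) = N * (ℓ * (k - ℓ)) - ∑ j, b j ^ 2 := by
    rw [hwu, Finset.sum_congr rfl fun j _ => hexpand j, Finset.sum_sub_distrib,
      Finset.sum_add_distrib, ← Finset.mul_sum _ b, sum_sub_perm_eq_zero σ]
    simp
  have hpos := sum_sq_sub_perm_pos hσ
  rw [Set.mem_ofPred_eq, hwu']
  linarith

theorem rectSchur_hasLeadingMonomial (i : Fin k) :
    HasLeadingMonomial (rectWeight k) (rectSchur k (i + 1)) (single i (k - i)) := by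
  set N := k + 1 - ((i : ℕ) + 1)
  have hN : N = k - i := by omega
  have hdet : rectSchur k (i + 1) = ∑ σ : Equiv.Perm (Fin N), Equiv.Perm.sign σ •
      ∏ j : Fin N, hElem k (((i + 1 : ℕ) : ℤ) + (((j : ℕ) : ℤ) - (σ j : ℕ))) := by
    rw [rectSchur, Matrix.det_apply]
    refine Finset.sum_congr rfl fun σ _ => congrArg _ (Finset.prod_congr rfl fun j _ => ?_)
    rw [Matrix.of_apply]
    congr 1
    ring
  have hdiag : ∏ j : Fin N,
      hElem k (((i + 1 : ℕ) : ℤ) + (((j : ℕ) : ℤ) - ((1 : Equiv.Perm (Fin N)) j : ℕ))) =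
        monomial (single i (k - i)) 1 := by
    simp only [Equiv.Perm.one_apply, sub_self, add_zero, Finset.prod_const, Finset.card_univ,
      Fintype.card_fin]
    rw [hElem_natCast_succ, X_pow_eq_monomial, hN]
  have hweight : (weight (rectWeight k) (single i (k - i)) : ℤ) =
      N * (((i + 1 : ℕ) : ℤ) * (k - ((i + 1 : ℕ) : ℤ))) := by
    rw [Finsupp.weight_single, smul_eq_mul, rectWeight, ← hN]
    push_cast [show (i : ℕ) + 1 ≤ k from i.isLt]
    rfl
  rw [HasLeadingMonomial, hdet, ← Finset.add_sum_erase _ _ (Finset.mem_univ 1),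
    Equiv.Perm.sign_one, one_smul, hdiag, add_sub_cancel_left]
  refine Submodule.sum_mem _ fun σ hσ => ?_
  rw [Units.smul_def]
  refine zsmul_mem (restrictSupport_mono ℚ (fun u hu => ?_)
    (prod_hElem_perm_mem_restrictSupport _ (Finset.ne_of_mem_erase hσ))) _
  rw [Set.mem_ofPred_eq, ← hweight] at hu
  exact Set.mem_ofPred.2 (by exact_mod_cast hu)

end Rectangles

section Family

variable (k : ℕ)

/-- Writing `d i = q i * (k - i) + r i` with `r i < k - i`, this is
`(∏ i, S_{((i+1)^(k-i))} ^ q i) * X ^ r`. -/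
noncomputable def rectFamily (d : Fin k →₀ ℕ) : MvPolynomial (Fin k) ℚ :=
  (∏ i : Fin k, rectSchur k (i + 1) ^ (d i / (k - i))) *
    monomial (Finsupp.equivFunOnFinite.symm fun i : Fin k => d i % (k - i)) 1

/-- The exponent vectors (see `partitionExponent`) of the `k`-irreducible partitions. -/
def irreducibleExponents : Set (Fin k →₀ ℕ) := {d | ∀ i, d i < k - i}

variable {k}

theorem rectFamily_hasLeadingMonomial (d : Fin k →₀ ℕ) :
    HasLeadingMonomial (rectWeight k) (rectFamily k d) d := by
  have h := (HasLeadingMonomial.prod Finset.univ fun i _ =>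
    (rectSchur_hasLeadingMonomial i).pow (d i / (k - i))).mul
      (hasLeadingMonomial_monomial (Finsupp.equivFunOnFinite.symm fun i => d i % (k - i)))
  have hd : (∑ i, (d i / (k - i)) • single i (k - i)) +
      Finsupp.equivFunOnFinite.symm (fun i : Fin k => d i % (k - i)) = d := by
    ext j
    simp only [Finsupp.add_apply, Finsupp.finsetSum_apply, Finsupp.smul_apply, smul_eq_mul,
      Finsupp.single_apply, mul_ite, mul_zero, Finset.sum_ite_eq', Finset.mem_univ, if_true,
      Finsupp.coe_equivFunOnFinite_symm]
    exact Nat.div_add_mod' _ _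
  rwa [hd] at h

theorem rectFamily_of_mem_irreducibleExponents {d : Fin k →₀ ℕ}
    (hd : d ∈ irreducibleExponents k) : rectFamily k d = monomial d 1 := by
  have hrem : (Finsupp.equivFunOnFinite.symm fun i => d i % (k - i)) = d := by
    ext i
    simp [Nat.mod_eq_of_lt (hd i)]
  simp [rectFamily, Nat.div_eq_of_lt (hd _), hrem]

theorem rectFamily_add_single (d : Fin k →₀ ℕ) (i : Fin k) :
    rectFamily k (d + single i (k - i)) = rectSchur k (i + 1) * rectFamily k d := by
  classical
  have hki : 0 < k - i := by omega
  have hquot : ∀ j,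
      (d + single i (k - i)) j / (k - j) = d j / (k - j) + if i = j then 1 else 0 := by
    intro j
    rcases eq_or_ne i j with rfl | hij
    · simp [Nat.add_div_right _ hki]
    · simp [hij]
  have hrem : ∀ j, (d + single i (k - i)) j % (k - j) = d j % (k - j) := by
    intro j
    rcases eq_or_ne i j with rfl | hij
    · simp
    · simp [hij]
  simp only [rectFamily, hquot, hrem, pow_add, Finset.prod_mul_distrib, Finset.prod_pow_boole,
    Finset.mem_univ, if_true]
  ring

theorem rectFamily_sub_mem_span (d : Fin k →₀ ℕ) :
    rectFamily k d - basisMonomials (Fin k) ℚ d ∈ Submodule.span ℚ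
      (basisMonomials (Fin k) ℚ '' {u | weight (rectWeight k) u < weight (rectWeight k) d}) := by
  rw [coe_basisMonomials, ← restrictSupport_eq_span]
  exact rectFamily_hasLeadingMonomial d

variable (k)

noncomputable def rectBasis : Module.Basis (Fin k →₀ ℕ) ℚ (MvPolynomial (Fin k) ℚ) :=
  (basisMonomials (Fin k) ℚ).unitriangular (weight (rectWeight k)) rectFamily_sub_mem_span

@[simp]
theorem rectBasis_apply (d : Fin k →₀ ℕ) : rectBasis k d = rectFamily k d :=
  Module.Basis.unitriangular_apply _ _ _ _

end Family

section Quotient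

variable {k : ℕ}

theorem rectSchur_image_Icc :
    rectSchur k '' Set.Icc 1 k = Set.range fun i : Fin k => rectSchur k (i + 1) := by
  ext p
  constructor
  · rintro ⟨ℓ, ⟨h1, h2⟩, rfl⟩
    exact ⟨⟨ℓ - 1, by omega⟩, by simp only [Nat.sub_add_cancel h1]⟩
  · rintro ⟨i, rfl⟩
    exact ⟨i + 1, ⟨by omega, i.isLt⟩, rfl⟩

theorem add_single_notMem_irreducibleExponents (d : Fin k →₀ ℕ) (i : Fin k) :
    d + single i (k - i) ∉ irreducibleExponents k := fun h => by
  have := h i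
  simp at this

theorem mul_rectSchur_mem_span (g : MvPolynomial (Fin k) ℚ) (i : Fin k) :
    g * rectSchur k (i + 1) ∈
      Submodule.span ℚ (rectBasis k '' (irreducibleExponents k)ᶜ) := by
  have hg : g ∈ Submodule.span ℚ (Set.range (rectBasis k)) := by
    rw [(rectBasis k).span_eq]
    trivial
  induction hg using Submodule.span_induction with
  | mem _ hp =>
    obtain ⟨d, rfl⟩ := hp
    rw [rectBasis_apply, mul_comm, ← rectFamily_add_single, ← rectBasis_apply]
    exact Submodule.subset_span ⟨_, add_single_notMem_irreducibleExponents d i, rfl⟩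
  | zero => simp
  | add p q _ _ hp hq =>
    rw [add_mul]
    exact Submodule.add_mem _ hp hq
  | smul c p _ hp =>
    rw [smul_mul_assoc]
    exact Submodule.smul_mem _ c hp

variable (k)

theorem rectIdeal_restrictScalars : (rectIdeal k).restrictScalars ℚ =
    Submodule.span ℚ (rectBasis k '' (irreducibleExponents k)ᶜ) := by
  apply le_antisymm
  · intro x hx
    rw [Submodule.restrictScalars_mem, rectIdeal, rectSchur_image_Icc] at hx
    obtain ⟨c, rfl⟩ := Ideal.mem_span_range_iff_exists_fun.1 hx
    exact Submodule.sum_mem _ fun i _ => mul_rectSchur_mem_span (c i) i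
  · rw [Submodule.span_le]
    rintro _ ⟨d, hd, rfl⟩
    obtain ⟨i, hi⟩ : ∃ i, k - i ≤ d i := by
      simpa [irreducibleExponents] using hd
    have hsplit : d - single i (k - i) + single i (k - i) = d :=
      tsub_add_cancel_of_le (Finsupp.single_le_iff.2 hi)
    rw [rectBasis_apply, ← hsplit, rectFamily_add_single]
    exact Ideal.mul_mem_right _ _ (Ideal.subset_span ⟨i + 1, ⟨by omega, i.isLt⟩, rfl⟩)

noncomputable def rectQuotientBasis :
    Module.Basis (irreducibleExponents k) ℚ (MvPolynomial (Fin k) ℚ ⧸ rectIdeal k) :=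
  ((rectBasis k).quotientSpanCompl _).map
    ((Submodule.quotEquivOfEq _ _ (rectIdeal_restrictScalars k).symm).trans
      (Submodule.Quotient.restrictScalarsEquiv ℚ (rectIdeal k)))

theorem rectQuotientBasis_apply (d : irreducibleExponents k) :
    rectQuotientBasis k d = Ideal.Quotient.mk (rectIdeal k) (monomial d 1) := by
  simp [rectQuotientBasis, rectFamily_of_mem_irreducibleExponents d.2]

end Quotient

section Partitions

variable {k : ℕ}

theorem Fin.exists_val_add_one_eq {j : ℕ} (h1 : 1 ≤ j) (h2 : j ≤ k) :
    ∃ i : Fin k, (i : ℕ) + 1 = j :=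
  ⟨⟨j - 1, by omega⟩, by simp only; omega⟩

variable (k) in
/-- The exponent vector of a partition: its `i`-th entry counts the parts equal to `i + 1`. -/
noncomputable def partitionExponent (l : List ℕ) : Fin k →₀ ℕ :=
  Finsupp.equivFunOnFinite.symm fun i => l.count ((i : ℕ) + 1)

@[simp]
theorem partitionExponent_apply (l : List ℕ) (i : Fin k) :
    partitionExponent k l i = l.count ((i : ℕ) + 1) :=
  rfl

theorem hProd_cons (a : ℕ) (l : List ℕ) : hProd k (a :: l) = hElem k a * hProd k l := by
  simp [hProd]

theorem hProd_eq_monomial {l : List ℕ} (hl : ∀ x ∈ l, 1 ≤ x ∧ x ≤ k) :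
    hProd k l = monomial (partitionExponent k l) 1 := by
  induction l with
  | nil =>
    have : partitionExponent k [] = 0 := by ext; simp
    simp [hProd, this]
  | cons a l ih =>
    obtain ⟨i, rfl⟩ := Fin.exists_val_add_one_eq (hl a (List.mem_cons_self ..)).1
      (hl a (List.mem_cons_self ..)).2
    have hexp : partitionExponent k (((i : ℕ) + 1) :: l) = single i 1 + partitionExponent k l := by
      ext j
      simp only [partitionExponent_apply, List.count_cons, Finsupp.add_apply,
        Finsupp.single_apply, beq_iff_eq, Nat.add_right_cancel_iff, Fin.val_inj]
      split_ifs <;> omega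
    rw [hProd_cons, hElem_natCast_succ,
      ih fun x hx => hl x (List.mem_cons_of_mem _ hx), hexp, X, monomial_mul, one_mul]

variable (k) in
noncomputable def exponentPartition (d : Fin k →₀ ℕ) : List ℕ :=
  ((Finsupp.toMultiset d).map fun i : Fin k => (i : ℕ) + 1).sort (· ≥ ·)

theorem mem_exponentPartition {d : Fin k →₀ ℕ} {x : ℕ} (hx : x ∈ exponentPartition k d) :
    1 ≤ x ∧ x ≤ k := by
  obtain ⟨i, -, rfl⟩ := Multiset.mem_map.1 (Multiset.mem_sort _ |>.1 hx)
  omega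

theorem count_exponentPartition (d : Fin k →₀ ℕ) (i : Fin k) :
    (exponentPartition k d).count ((i : ℕ) + 1) = d i := by
  classical
  have hinj : Function.Injective fun j : Fin k => (j : ℕ) + 1 := fun a b h => by
    simpa [Fin.ext_iff] using h
  rw [exponentPartition, ← Multiset.coe_count, Multiset.sort_eq]
  exact (Multiset.count_map_eq_count' _ _ hinj i).trans (Finsupp.count_toMultiset d i)

theorem partitionExponent_exponentPartition (d : Fin k →₀ ℕ) :
    partitionExponent k (exponentPartition k d) = d := by
  ext i
  exact count_exponentPartition d i

theorem exponentPartition_partitionExponent {l : List ℕ} (hl : IsKBoundedPartition k l) :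
    exponentPartition k (partitionExponent k l) = l := by
  obtain ⟨⟨hsorted, hpos⟩, hle⟩ := hl
  refine List.Perm.eq_of_pairwise' (Multiset.pairwise_sort _ _) hsorted
    (List.perm_iff_count.2 fun j => ?_)
  by_cases hj : 1 ≤ j ∧ j ≤ k
  · obtain ⟨i, rfl⟩ := Fin.exists_val_add_one_eq hj.1 hj.2
    rw [count_exponentPartition, partitionExponent_apply]
  · rw [List.count_eq_zero_of_not_mem fun h => hj (mem_exponentPartition h),
      List.count_eq_zero_of_not_mem fun h => hj ⟨hpos j h, hle j h⟩]

variable (k) in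
noncomputable def irreducibleEquiv :
    {l : List ℕ // IsKIrreducible k l} ≃ irreducibleExponents k where
  toFun l := ⟨partitionExponent k l, fun i => by
    have := l.2.2 (i + 1) (by omega) i.isLt
    rw [partitionExponent_apply]
    omega⟩
  invFun d := ⟨exponentPartition k d,
    ⟨⟨Multiset.pairwise_sort _ _, fun _ hx => (mem_exponentPartition hx).1⟩,
      fun _ hx => (mem_exponentPartition hx).2⟩,
    fun j h1 h2 => by
      obtain ⟨i, rfl⟩ := Fin.exists_val_add_one_eq h1 h2
      have := d.2 i
      rw [count_exponentPartition]
      omega⟩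
  left_inv l := Subtype.ext (exponentPartition_partitionExponent l.2.1)
  right_inv d := Subtype.ext (partitionExponent_exponentPartition d.1)

end Partitions

theorem hProd_irreducible_basis_quotient_general (k : ℕ) :
    ∃ b : Module.Basis {l : List ℕ // IsKIrreducible k l} ℚ
        (MvPolynomial (Fin k) ℚ ⧸ rectIdeal k),
      ∀ l, b l = Ideal.Quotient.mk (rectIdeal k) (hProd k l.1) := by
  refine ⟨(rectQuotientBasis k).reindex (irreducibleEquiv k).symm, fun l => ?_⟩
  obtain ⟨⟨⟨-, hpos⟩, hle⟩, -⟩ := l.2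
  rw [Module.Basis.reindex_apply, Equiv.symm_symm, rectQuotientBasis_apply,
    hProd_eq_monomial fun x hx => ⟨hpos x hx, hle x hx⟩]
  rfl

/-- The images in the quotient ring `R/I_k` of the products
`h_λ = h_{λ_1} ⋯ h_{λ_n}`, as `λ` ranges over all `k`-irreducible partitions,
form a basis of `R/I_k` as a `ℚ`-vector space. -/
theorem hProd_irreducible_basis_quotient (k : ℕ) (hk : 0 < k) :
    ∃ b : Module.Basis {l : List ℕ // IsKIrreducible k l} ℚ
        (MvPolynomial (Fin k) ℚ ⧸ rectIdeal k),
      ∀ l, b l = Ideal.Quotient.mk (rectIdeal k) (hProd k l.1) :=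
  hProd_irreducible_basis_quotient_general k
end

section
/- Let λ be a partition with n parts and main hook-length h_M(λ) = λ_1 + n − 1. If k ≥ h_M(λ), then the k-conjugate of λ equals the ordinary conjugate: λ^{ω_k} = λ′, where λ′_j is the number of parts of λ that are at least j. -/
/-- The ordinary conjugate of a partition `l` (a weakly decreasing list of
positive integers, so that `l.headI = l₁` is the largest part): its `j`-th part
is the number of parts of `l` that are at least `j`. -/
def conjugateList (l : List ℕ) : List ℕ :=
  (List.range l.headI).map fun j => (l.filter fun x => decide (j < x)).length

/-!
When `k ≥ h_M(λ)`, every `k`-multiplication step can put its new column at height `0`: the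
result is the Young diagram of the conjugate of the partition built so far, a skew diagram whose
largest hook-length is the main hook-length, hence at most `k`. So by induction `D(λ)` is the
Young diagram of `λ′`, whose row lengths are `λ′`.
-/

/-- The Young diagram of `λ′`, as left-justified rows. -/
def youngRows (l : List ℕ) : List (ℕ × ℕ) :=
  (conjugateList l).map (Prod.mk 0)

lemma le_headI_of_mem {l : List ℕ} (hl : l.Pairwise (· ≥ ·)) {x : ℕ} (hx : x ∈ l) :
    x ≤ l.headI := by
  cases l with
  | nil => simp at hx
  | cons a t =>
    rcases List.mem_cons.mp hx with rfl | h
    · rfl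
    · exact List.rel_of_pairwise_cons hl h

lemma headI_le_of_pairwise_cons {m : ℕ} {l : List ℕ} (hl : (m :: l).Pairwise (· ≥ ·)) :
    l.headI ≤ m := by
  cases l with
  | nil => exact Nat.zero_le m
  | cons a t => exact List.rel_of_pairwise_cons hl List.mem_cons_self

lemma countP_lt_antitone (l : List ℕ) : Antitone fun i => l.countP (i < ·) := by
  intro i j hij
  refine List.countP_mono_left fun x _ hx => ?_
  simp only [decide_eq_true_eq] at hx ⊢
  omega

lemma countP_lt_pos {l : List ℕ} {i : ℕ} (hi : i < l.headI) : 0 < l.countP (i < ·) := by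
  cases l with
  | nil => simp at hi
  | cons a t => simp_all

lemma length_conjugateList (l : List ℕ) : (conjugateList l).length = l.headI := by
  simp [conjugateList]

lemma conjugateList_getD {l : List ℕ} (hl : l.Pairwise (· ≥ ·)) (i : ℕ) :
    (conjugateList l).getD i 0 = l.countP (i < ·) := by
  by_cases hi : i < l.headI
  · rw [List.getD_eq_getElem _ _ (by simpa [conjugateList] using hi)]
    simp [conjugateList, List.countP_eq_length_filter]
  · rw [List.getD_eq_default _ _ (by simpa [conjugateList] using hi), eq_comm,
      List.countP_eq_zero]
    intro x hx
    simpa using (le_headI_of_mem hl hx).trans (not_lt.mp hi)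

lemma length_youngRows (l : List ℕ) : (youngRows l).length = l.headI := by
  simp [youngRows, length_conjugateList]

lemma rowOf_youngRows {l : List ℕ} (hl : l.Pairwise (· ≥ ·)) (i : ℕ) :
    rowOf (youngRows l) i = (0, l.countP (i < ·)) := by
  rw [rowOf, youngRows, List.getD_map, conjugateList_getD hl]

lemma getElem_youngRows {l : List ℕ} (hl : l.Pairwise (· ≥ ·)) (i : ℕ)
    (hi : i < (youngRows l).length) : (youngRows l)[i] = (0, l.countP (i < ·)) := by
  rw [← rowOf_youngRows hl, rowOf, List.getD_eq_getElem]

lemma isSkewRows_youngRows {l : List ℕ} (hl : l.Pairwise (· ≥ ·)) :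
    IsSkewRows (youngRows l) := by
  constructor
  · intro r hr
    obtain ⟨i, hi, rfl⟩ := List.getElem_of_mem hr
    rw [getElem_youngRows hl]
    exact countP_lt_pos (by simpa [length_youngRows] using hi)
  · refine List.isChain_iff_getElem.mpr fun i hi => ?_
    rw [getElem_youngRows hl, getElem_youngRows hl]
    exact ⟨le_rfl, by simpa using countP_lt_antitone l (Nat.le_succ i)⟩

lemma hookBounded_youngRows {k : ℕ} {l : List ℕ} (hl : l.Pairwise (· ≥ ·))
    (hM : l.headI + l.length ≤ k + 1) : HookBounded k (youngRows l) := by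
  rintro i j ⟨hi, -, hj⟩
  rw [length_youngRows] at hi
  rw [rowOf_youngRows hl] at hj
  have hrow : l.countP (i < ·) ≤ l.length := List.countP_le_length
  have harm : armLen (youngRows l) i j ≤ l.length - 1 := by
    rw [armLen, rowOf_youngRows hl]
    omega
  have hleg : legLen (youngRows l) i j ≤ l.headI - i - 1 := by
    rw [legLen, ← Nat.card_Ioo]
    refine Finset.card_le_card fun x hx => ?_
    simp only [Finset.mem_filter, Finset.mem_range, length_youngRows] at hx
    exact Finset.mem_Ioo.mpr ⟨hx.2.1, hx.1⟩
  rw [hookLen]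
  omega

lemma getElem_addCol_of_mem_column {m h i : ℕ} {D : List (ℕ × ℕ)} (hhi : h ≤ i)
    (him : i < h + m) (hi : i < (addCol m h D).length) :
    (addCol m h D)[i] = (0, (rowOf D i).1 + (rowOf D i).2 + 1) := by
  simp only [addCol, List.getElem_map, List.getElem_range, hhi, him, and_self, if_true]
  split_ifs with hiD
  · rfl
  · rw [rowOf, List.getD_eq_default _ _ (not_lt.mp hiD)]
    rfl

lemma addCol_zero_youngRows {m : ℕ} {l : List ℕ} (hl : (m :: l).Pairwise (· ≥ ·)) :
    addCol m 0 (youngRows l) = youngRows (m :: l) := by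
  have hhead := headI_le_of_pairwise_cons hl
  refine List.ext_getElem (by simp [addCol, length_youngRows, hhead]) fun i hi _ => ?_
  have him : i < m := by simpa [addCol, length_youngRows, hhead] using hi
  rw [getElem_addCol_of_mem_column (Nat.zero_le i) (by omega), rowOf_youngRows hl.of_cons,
    getElem_youngRows hl, List.countP_cons_of_pos (by simpa using him), zero_add]

lemma colValid_zero_youngRows {k m : ℕ} {l : List ℕ} (hl : (m :: l).Pairwise (· ≥ ·))
    (hM : m + (l.length + 1) ≤ k + 1) : ColValid k m 0 (youngRows l) := by
  refine ⟨fun i _ _ _ => by rw [rowOf_youngRows hl.of_cons], ?_⟩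
  rw [addCol_zero_youngRows hl]
  exact ⟨isSkewRows_youngRows hl, hookBounded_youngRows hl hM⟩

lemma kMul_youngRows {k m : ℕ} {l : List ℕ} (hl : (m :: l).Pairwise (· ≥ ·))
    (hM : m + (l.length + 1) ≤ k + 1) : kMul k m (youngRows l) = youngRows (m :: l) := by
  rw [kMul, Nat.sInf_eq_zero.mpr (Or.inl (colValid_zero_youngRows hl hM)),
    addCol_zero_youngRows hl]

lemma kSkewDiagram_eq_youngRows {k : ℕ} {l : List ℕ} (hl : l.Pairwise (· ≥ ·))
    (hM : l.headI + l.length ≤ k + 1) : kSkewDiagram k l = youngRows l := by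
  induction l with
  | nil => rfl
  | cons m l ih =>
    have hMl : l.headI + l.length ≤ k + 1 := by
      have := headI_le_of_pairwise_cons hl
      simp only [List.headI, List.length_cons] at hM
      omega
    rw [kSkewDiagram, ih hl.of_cons hMl, kMul_youngRows hl hM]

theorem kConjugate_eq_conjugate_of_large_general (k : ℕ) (l : List ℕ)
    (hl : IsPartitionList l) (hM : l.headI + l.length ≤ k + 1) :
    kConjugate k l = conjugateList l := by
  rw [kConjugate, kSkewDiagram_eq_youngRows hl.1 hM, youngRows, List.map_map]
  exact List.map_id _

/-- If `λ` is a partition with `n` parts and main hook-length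
`h_M(λ) = λ₁ + n - 1`, and `k ≥ h_M(λ)`, then the `k`-conjugate of `λ` equals
its ordinary conjugate. -/
theorem kConjugate_eq_conjugate_of_large (k : ℕ) (hk : 0 < k) (l : List ℕ)
    (hl : IsPartitionList l) (hM : l.headI + l.length ≤ k + 1) :
    kConjugate k l = conjugateList l :=
  kConjugate_eq_conjugate_of_large_general k l hl hM
end

section
/- Every k-bounded partition μ can be written as the partition rearrangement (multiset union of parts) μ = λ ∪ R_1 ∪ ⋯ ∪ R_n of a k-irreducible partition λ and finitely many k-rectangles R_1,…,R_n, and this decomposition is unique: λ and the multiset {R_1,…,R_n} of k-rectangles are uniquely determined by μ. -/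
namespace Multiset

variable {α : Type*} [DecidableEq α]

theorem count_sum_map_replicate (f : α → ℕ) (S : Multiset α) (x : α) :
    ((S.map fun a => replicate (f a) a).sum).count x = S.count x * f x := by
  induction S using Multiset.induction with
  | empty => simp
  | cons a S ih =>
    rcases eq_or_ne x a with rfl | hxa
    · simp [ih, add_mul, add_comm]
    · simp [ih, count_replicate, hxa, Ne.symm hxa]

theorem count_sum_toFinset_replicate (m : Multiset α) (g : α → ℕ) (hg : ∀ a ∉ m, g a = 0)
    (x : α) : (∑ a ∈ m.toFinset, replicate (g a) a).count x = g x := by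
  rw [count_sum']
  simp only [count_replicate, Finset.sum_ite_eq', mem_toFinset]
  split_ifs with hx
  · rfl
  · exact (hg x hx).symm

end Multiset

open Multiset

/- For `j > k` we have `k + 1 - j = 0`, and then `n / 0 = 0`, `n % 0 = n`: the definitions
below need no case split, and the multiplicity identity holds for every `j`. -/

def kIrreduciblePart (k : ℕ) (m : Multiset ℕ) : Multiset ℕ :=
  ∑ j ∈ m.toFinset, replicate (m.count j % (k + 1 - j)) j

def kRectangleHeights (k : ℕ) (m : Multiset ℕ) : Multiset ℕ :=
  ∑ j ∈ m.toFinset, replicate (m.count j / (k + 1 - j)) j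

section Decomposition

variable (k : ℕ) (m : Multiset ℕ)

theorem count_kIrreduciblePart (j : ℕ) :
    (kIrreduciblePart k m).count j = m.count j % (k + 1 - j) :=
  count_sum_toFinset_replicate m _ (fun a ha => by simp [count_eq_zero_of_notMem ha]) j

theorem count_kRectangleHeights (j : ℕ) :
    (kRectangleHeights k m).count j = m.count j / (k + 1 - j) :=
  count_sum_toFinset_replicate m _ (fun a ha => by simp [count_eq_zero_of_notMem ha]) j

theorem kIrreduciblePart_le : kIrreduciblePart k m ≤ m :=
  le_iff_count.mpr fun j => (count_kIrreduciblePart k m j).trans_le (Nat.mod_le _ _)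

theorem kRectangleHeights_le : kRectangleHeights k m ≤ m :=
  le_iff_count.mpr fun j => (count_kRectangleHeights k m j).trans_le (Nat.div_le_self _ _)

theorem kIrreduciblePart_add_kRectangles :
    kIrreduciblePart k m +
      ((kRectangleHeights k m).map fun ℓ => replicate (k + 1 - ℓ) ℓ).sum = m := by
  ext j
  rw [count_add, count_sum_map_replicate, count_kIrreduciblePart, count_kRectangleHeights,
    Nat.mod_add_div']

variable {k m}

theorem count_kIrreduciblePart_lt (hm : ∀ x ∈ m, 0 < x) {j : ℕ} (hj : j ≤ k) :
    (kIrreduciblePart k m).count j < k + 1 - j := by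
  rw [count_kIrreduciblePart]
  rcases j.eq_zero_or_pos with rfl | hj0
  · simp [count_eq_zero_of_notMem fun h => (hm 0 h).false]
  · exact Nat.mod_lt _ (by omega)

theorem eq_kIrreduciblePart_and_kRectangleHeights {l S : Multiset ℕ}
    (hl : ∀ j ≤ k, l.count j < k + 1 - j) (hS : ∀ ℓ ∈ S, ℓ ≤ k)
    (hm : m = l + (S.map fun ℓ => replicate (k + 1 - ℓ) ℓ).sum) :
    l = kIrreduciblePart k m ∧ S = kRectangleHeights k m := by
  have hcount (j : ℕ) : l.count j = m.count j % (k + 1 - j) ∧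
      S.count j = m.count j / (k + 1 - j) := by
    rw [hm, count_add, count_sum_map_replicate]
    by_cases hj : j ≤ k
    · have hd : 0 < k + 1 - j := by omega
      rw [Nat.add_mul_mod_self_right, Nat.mod_eq_of_lt (hl j hj), Nat.add_mul_div_right _ _ hd,
        Nat.div_eq_of_lt (hl j hj), zero_add]
      exact ⟨rfl, rfl⟩
    · have : S.count j = 0 := count_eq_zero_of_notMem fun h => hj (hS j h)
      simp [this, show k + 1 - j = 0 by omega]
  refine ⟨ext.mpr fun j => ?_, ext.mpr fun j => ?_⟩
  · rw [count_kIrreduciblePart, (hcount j).1]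
  · rw [count_kRectangleHeights, (hcount j).2]

end Decomposition

theorem IsKIrreducible.count_lt {k : ℕ} {l : List ℕ} (hl : IsKIrreducible k l) {j : ℕ}
    (hj : j ≤ k) : l.count j < k + 1 - j := by
  rcases j.eq_zero_or_pos with rfl | hj0
  · simp [List.count_eq_zero.mpr fun h => (hl.1.1.2 0 h).false]
  · have := hl.2 j hj0 hj
    omega

theorem isKIrreducible_sort {k : ℕ} {m : Multiset ℕ} (hpos : ∀ x ∈ m, 0 < x)
    (hbdd : ∀ x ∈ m, x ≤ k) (hcount : ∀ j ≤ k, m.count j < k + 1 - j) :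
    IsKIrreducible k (m.sort (· ≥ ·)) := by
  refine ⟨⟨⟨pairwise_sort _ _, fun x hx => hpos x ((mem_sort _).mp hx)⟩,
    fun x hx => hbdd x ((mem_sort _).mp hx)⟩, fun j _ hj => ?_⟩
  have := hcount j hj
  rw [← coe_count, sort_eq]
  omega

theorem IsPartitionList.sort_coe {l : List ℕ} (hl : IsPartitionList l) :
    (l : Multiset ℕ).sort (· ≥ ·) = l := by
  rw [coe_sort, List.mergeSort_eq_self _ hl.1]

theorem kRectangle_decomposition_general (k : ℕ) (μ : List ℕ)
    (hμ : IsKBoundedPartition k μ) :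
    ∃! p : List ℕ × Multiset ℕ,
      IsKIrreducible k p.1 ∧ (∀ ℓ ∈ p.2, 1 ≤ ℓ ∧ ℓ ≤ k) ∧
      (↑μ : Multiset ℕ) = (↑p.1 : Multiset ℕ) +
        (p.2.map fun ℓ => Multiset.replicate (k + 1 - ℓ) ℓ).sum := by
  obtain ⟨⟨-, hpos⟩, hbdd⟩ := hμ
  have hpos' : ∀ x ∈ (μ : Multiset ℕ), 0 < x := hpos
  have hbdd' : ∀ x ∈ (μ : Multiset ℕ), x ≤ k := hbdd
  refine ⟨((kIrreduciblePart k μ).sort (· ≥ ·), kRectangleHeights k μ), ⟨?_, ?_, ?_⟩, ?_⟩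
  · have hle := kIrreduciblePart_le k μ
    exact isKIrreducible_sort (fun x hx => hpos' x (mem_of_le hle hx))
      (fun x hx => hbdd' x (mem_of_le hle hx)) fun j hj => count_kIrreduciblePart_lt hpos' hj
  · have hle := kRectangleHeights_le k μ
    exact fun ℓ hℓ => ⟨hpos' ℓ (mem_of_le hle hℓ), hbdd' ℓ (mem_of_le hle hℓ)⟩
  · rw [sort_eq, kIrreduciblePart_add_kRectangles]
  · rintro ⟨l, S⟩ ⟨hl, hS, hμ⟩
    obtain ⟨hlμ, rfl⟩ := eq_kIrreduciblePart_and_kRectangleHeights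
      (fun j hj => by rw [coe_count]; exact hl.count_lt hj) (fun ℓ hℓ => (hS ℓ hℓ).2) hμ
    rw [← hlμ, hl.1.1.sort_coe]

/-- Every `k`-bounded partition `μ` can be written as the partition
rearrangement (multiset union of parts) `μ = λ ∪ R_1 ∪ ⋯ ∪ R_n` of a
`k`-irreducible partition `λ` and finitely many `k`-rectangles (the
`k`-rectangle `(ℓ^{k+1-ℓ})`, `1 ≤ ℓ ≤ k`, being recorded by its column height
`ℓ`, contributing `k+1-ℓ` parts equal to `ℓ`), and this decomposition is unique:
`λ` and the multiset of `k`-rectangles are uniquely determined by `μ`. -/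
theorem kRectangle_decomposition (k : ℕ) (hk : 0 < k) (μ : List ℕ)
    (hμ : IsKBoundedPartition k μ) :
    ∃! p : List ℕ × Multiset ℕ,
      IsKIrreducible k p.1 ∧ (∀ ℓ ∈ p.2, 1 ≤ ℓ ∧ ℓ ≤ k) ∧
      (↑μ : Multiset ℕ) = (↑p.1 : Multiset ℕ) +
        (p.2.map fun ℓ => Multiset.replicate (k + 1 - ℓ) ℓ).sum :=
  kRectangle_decomposition_general k μ hμ
end
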